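/- arXiv:math/9811144 — 5 statements merged into one kernel-verified Lean document; each statement's English description precedes it below -/
import Mathlib

section
/- For any 0 < b < a with a/b ∉ ℤ, there exists φ ∈ L²(ℝ) such that (τ_{nb}φ)_{n∈ℤ} is a frame sequence but (τ_{na}φ)_{n∈ℤ} is not a frame sequence. -/
open MeasureTheory Complex
open scoped FourierTransform ENNReal InnerProductSpace Real

/-- Translation by `x` on `L²(ℝ)`: `(τ_x f)(y) = f(y - x)`. -/
noncomputable def tauL2 (x : ℝ) (φ : Lp ℂ 2 (volume : Measure ℝ)) :
    Lp ℂ 2 (volume : Measure ℝ) :=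
  Lp.compMeasurePreserving (fun y => y - x) (measurePreserving_sub_right volume x) φ

/-- `Φ_b(ξ) = Σ_{n∈ℤ} |φ̂((ξ+n)/b)|²`. -/
noncomputable def PhiB (b : ℝ) (φ : Lp ℂ 2 (volume : Measure ℝ)) (ξ : ℝ) : ℝ :=
  ∑' n : ℤ, ‖𝓕 (⇑φ) ((ξ + n) / b)‖ ^ 2

/-- `g` is a frame for its closed linear span, with bounds `A, B`. -/
def IsFrameSeqWith {ι : Type*} (g : ι → Lp ℂ 2 (volume : Measure ℝ)) (A B : ℝ) : Prop :=
  ∀ f ∈ (Submodule.span ℂ (Set.range g)).topologicalClosure,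
    A * ‖f‖ ^ 2 ≤ ∑' n : ι, ‖(inner ℂ f (g n) : ℂ)‖ ^ 2 ∧
      ∑' n : ι, ‖(inner ℂ f (g n) : ℂ)‖ ^ 2 ≤ B * ‖f‖ ^ 2

/-- `g` is a frame sequence (frame for its closed linear span). -/
def IsFrameSeq {ι : Type*} (g : ι → Lp ℂ 2 (volume : Measure ℝ)) : Prop :=
  ∃ A B : ℝ, 0 < A ∧ 0 < B ∧ IsFrameSeqWith g A B

/-- `g` is a Riesz basis for its closed span (exact frame sequence) with bounds `A, B`. -/
def IsRieszSeqWith {ι : Type*} (g : ι → Lp ℂ 2 (volume : Measure ℝ)) (A B : ℝ) : Prop :=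
  ∀ (s : Finset ι) (c : ι → ℂ),
    A * ∑ n ∈ s, ‖c n‖ ^ 2 ≤ ‖∑ n ∈ s, c n • g n‖ ^ 2 ∧
      ‖∑ n ∈ s, c n • g n‖ ^ 2 ≤ B * ∑ n ∈ s, ‖c n‖ ^ 2

/-- `g` is an exact frame sequence (Riesz basis for its closed span). -/
def IsRieszSeq {ι : Type*} (g : ι → Lp ℂ 2 (volume : Measure ℝ)) : Prop :=
  ∃ A B : ℝ, 0 < A ∧ 0 < B ∧ IsRieszSeqWith g A B

/-!
Let `ε := b · |a/b - round (a/b)|` be the distance from `a` to `bℤ`, which is positive since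
`a/b ∉ ℤ` and at most `b/2`, and put `φ := 1_[0,ε) - 1_[a,a+ε)`. The intervals `[nb, nb+ε)` and
`[a+nb, a+nb+ε)` are then pairwise disjoint, so the `b`-translates of `φ` are orthogonal with
common norm `√(2ε)` and form a frame sequence. The `a`-translates are `e n - e (n+1)` for the
orthogonal family `e n := 1_[na, na+ε)`. The vector `∑_{[0,M)} e n - ∑_{[M,2M)} e n` lies in
their span and has squared norm `2Mε`, while its frame coefficients `ε (d j - d (j+1))`, with
`d` the `±1` block profile, have total square `6ε²`; so there is no lower frame bound.
-/

open Submodule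

section InnerProductSpace

variable {ι 𝕜 E : Type*} [RCLike 𝕜] [NormedAddCommGroup E] [InnerProductSpace 𝕜 E]

theorem Orthonormal.hasSum_norm_inner_sq_of_mem_closure [CompleteSpace E] {v : ι → E}
    (hv : Orthonormal 𝕜 v) {f : E} (hf : f ∈ (span 𝕜 (Set.range v)).topologicalClosure) :
    HasSum (fun i => ‖⟪f, v i⟫_𝕜‖ ^ 2) (‖f‖ ^ 2) := by
  set K := (span 𝕜 (Set.range v)).topologicalClosure
  let w : ι → K := fun i =>
    ⟨v i, (span 𝕜 (Set.range v)).le_topologicalClosure (subset_span ⟨i, rfl⟩)⟩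
  have hw : Orthonormal 𝕜 w := K.subtypeₗᵢ.orthonormal_comp_iff.mp hv
  have hdense : ⊤ ≤ (span 𝕜 (Set.range w)).topologicalClosure := by
    have himage : Subtype.val '' (span 𝕜 (Set.range w) : Set K) = span 𝕜 (Set.range v) := by
      rw [← K.coe_subtype, ← Submodule.map_coe, Submodule.map_span, ← Set.range_comp]
      rfl
    rw [top_le_iff, ← Submodule.dense_iff_topologicalClosure_eq_top,
      Topology.IsInducing.subtypeVal.dense_iff]
    intro x
    have hx : (x : E) ∈ closure (span 𝕜 (Set.range v) : Set E) := x.2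
    convert hx using 2
    exact himage
  have := lp.hasSum_norm (p := 2) (by norm_num) ((HilbertBasis.mk hw hdense).repr ⟨f, hf⟩)
  simp only [HilbertBasis.repr_apply_apply, LinearIsometryEquiv.norm_map, ENNReal.toReal_ofNat,
    Real.rpow_two, Submodule.coe_inner, Submodule.coe_norm, HilbertBasis.coe_mk] at this
  simpa only [norm_inner_symm] using this

theorem inner_sub_sub_eq_ite [DecidableEq ι] {u v : ι → E} {c : 𝕜}
    (hu : ∀ i j, ⟪u i, u j⟫_𝕜 = if i = j then c else 0)
    (hv : ∀ i j, ⟪v i, v j⟫_𝕜 = if i = j then c else 0)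
    (huv : ∀ i j, ⟪u i, v j⟫_𝕜 = 0) (i j : ι) :
    ⟪u i - v i, u j - v j⟫_𝕜 = if i = j then 2 * c else 0 := by
  simp only [inner_sub_left, inner_sub_right, hu, hv, huv, inner_eq_zero_symm.1 (huv _ _)]
  split_ifs <;> ring_nf

end InnerProductSpace

theorem isFrameSeqWith_of_inner_eq_ite {ι : Type*} [DecidableEq ι]
    {g : ι → Lp ℂ 2 (volume : Measure ℝ)} {c : ℝ} (hc : 0 < c)
    (hg : ∀ i j, ⟪g i, g j⟫_ℂ = if i = j then (c : ℂ) else 0) :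
    IsFrameSeqWith g c c := by
  set s : ℂ := ((√c : ℝ) : ℂ)
  have hs : s ≠ 0 := by simp [s, (Real.sqrt_pos.2 hc).ne']
  have hs_conj : (starRingEnd ℂ) s = s := Complex.conj_ofReal _
  have hss : s * s = c := by rw [← Complex.ofReal_mul, Real.mul_self_sqrt hc.le]
  set u := fun i => s⁻¹ • g i
  have hu : Orthonormal ℂ u := by
    rw [orthonormal_iff_ite]
    intro i j
    simp only [u, inner_smul_left, inner_smul_right, hg, map_inv₀, hs_conj]
    split_ifs
    · rw [← hss]
      field_simp
    · simp
  have hgu : ∀ i, g i = s • u i := fun i => by simp [u, smul_smul, hs]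
  have hspan : span ℂ (Set.range g) ≤ span ℂ (Set.range u) := by
    rw [span_le]
    rintro _ ⟨i, rfl⟩
    rw [hgu i]
    exact smul_mem _ _ (subset_span ⟨i, rfl⟩)
  intro f hf
  have hsum : ∑' i, ‖⟪f, g i⟫_ℂ‖ ^ 2 = c * ‖f‖ ^ 2 := by
    rw [← ((hu.hasSum_norm_inner_sq_of_mem_closure
      (topologicalClosure_mono hspan hf)).mul_left c).tsum_eq]
    congr 1 with i
    rw [hgu i, inner_smul_right, norm_mul, mul_pow, Complex.norm_real, Real.norm_eq_abs, sq_abs,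
      Real.sq_sqrt hc.le]
  exact ⟨hsum.ge, hsum.le⟩

section Differences

theorem sub_add_natCast_mem_span_sub_succ {R M : Type*} [Ring R] [AddCommGroup M] [Module R M]
    (e : ℤ → M) (n : ℤ) (k : ℕ) :
    e n - e (n + k) ∈ span R (Set.range fun m => e m - e (m + 1)) := by
  have htele := Finset.sum_range_sub' (fun i : ℕ => e (n + i)) k
  simp only [Nat.cast_zero, add_zero, Nat.cast_add, Nat.cast_one, ← add_assoc] at htele
  rw [← htele]
  exact sum_mem fun i _ => subset_span ⟨n + i, rfl⟩

def blockSign (M : ℕ) (j : ℤ) : ℝ :=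
  if 0 ≤ j ∧ j < M then 1 else if M ≤ j ∧ j < 2 * M then -1 else 0

theorem tsum_blockSign_sub_succ_sq {M : ℕ} (hM : 0 < M) :
    ∑' j : ℤ, (blockSign M j - blockSign M (j + 1)) ^ 2 = 6 := by
  rw [tsum_eq_sum (s := ({-1, (M : ℤ) - 1, 2 * (M : ℤ) - 1} : Finset ℤ))]
  · rw [Finset.sum_insert (by simp; omega), Finset.sum_pair (by omega)]
    simp only [blockSign]
    split_ifs <;> first | omega | norm_num
  · intro j hj
    simp only [Finset.mem_insert, Finset.mem_singleton] at hj
    simp only [blockSign]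
    split_ifs <;> first | omega | norm_num

variable {E : Type*} [AddCommGroup E]

noncomputable def blockDiff (e : ℤ → E) (M : ℕ) : E :=
  ∑ n ∈ Finset.Ico 0 (M : ℤ), e n - ∑ n ∈ Finset.Ico (M : ℤ) (2 * M), e n

theorem blockDiff_mem_span_sub_succ {R : Type*} [Ring R] [Module R E] (e : ℤ → E) (M : ℕ) :
    blockDiff e M ∈ span R (Set.range fun m => e m - e (m + 1)) := by
  have hshift := Finset.sum_Ico_add' e 0 (M : ℤ) M
  rw [zero_add, ← two_mul] at hshift
  rw [blockDiff, ← hshift, ← Finset.sum_sub_distrib]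
  exact sum_mem fun n _ => sub_add_natCast_mem_span_sub_succ e n M

end Differences

section OrthogonalDifferences

variable {E : Type*} [NormedAddCommGroup E] [InnerProductSpace ℂ E] {e : ℤ → E} {c : ℝ}

theorem inner_blockDiff (he : ∀ m n, ⟪e m, e n⟫_ℂ = if m = n then (c : ℂ) else 0) (M : ℕ)
    (j : ℤ) : ⟪blockDiff e M, e j⟫_ℂ = (c * blockSign M j : ℝ) := by
  simp only [blockDiff, inner_sub_left, sum_inner, he, Finset.sum_ite_eq', Finset.mem_Ico,
    blockSign]
  split_ifs <;> first | omega | push_cast; ring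

theorem norm_blockDiff_sq (he : ∀ m n, ⟪e m, e n⟫_ℂ = if m = n then (c : ℂ) else 0) (M : ℕ) :
    ‖blockDiff e M‖ ^ 2 = 2 * (M : ℝ) * c := by
  have hinner : ⟪blockDiff e M, blockDiff e M⟫_ℂ = (2 * (M : ℝ) * c : ℝ) := by
    conv_lhs => arg 3; rw [blockDiff]
    rw [inner_sub_right, inner_sum, inner_sum]
    have hfirst : ∀ n ∈ Finset.Ico 0 (M : ℤ), ⟪blockDiff e M, e n⟫_ℂ = c := fun n hn => by
      rw [inner_blockDiff he, blockSign, if_pos (Finset.mem_Ico.1 hn), mul_one]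
    have hsecond : ∀ n ∈ Finset.Ico (M : ℤ) (2 * M), ⟪blockDiff e M, e n⟫_ℂ = -c :=
      fun n hn => by
        have := Finset.mem_Ico.1 hn
        rw [inner_blockDiff he, blockSign, if_neg (by omega), if_pos this]
        push_cast
        ring
    rw [Finset.sum_congr rfl hfirst, Finset.sum_congr rfl hsecond, Finset.sum_const,
      Finset.sum_const, Int.card_Ico, Int.card_Ico,
      show ((M : ℤ) - 0).toNat = M by omega, show (2 * (M : ℤ) - M).toNat = M by omega]
    simp only [nsmul_eq_mul]
    push_cast
    ring
  rw [← inner_self_eq_norm_sq (𝕜 := ℂ), hinner, RCLike.re_to_complex, Complex.ofReal_re]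

end OrthogonalDifferences

theorem not_isFrameSeq_sub_succ {e : ℤ → Lp ℂ 2 (volume : Measure ℝ)} {c : ℝ} (hc : 0 < c)
    (he : ∀ m n, ⟪e m, e n⟫_ℂ = if m = n then (c : ℂ) else 0) :
    ¬ IsFrameSeq fun n => e n - e (n + 1) := by
  rintro ⟨A, B, hA, -, hframe⟩
  obtain ⟨M, hM⟩ := exists_nat_gt (3 * c / A)
  have hM0 : 0 < M := Nat.cast_pos.1 ((div_pos (by positivity) hA).trans hM)
  have hcoeff : ∀ j, ‖⟪blockDiff e M, e j - e (j + 1)⟫_ℂ‖ ^ 2 =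
      c ^ 2 * (blockSign M j - blockSign M (j + 1)) ^ 2 := fun j => by
    rw [inner_sub_right, inner_blockDiff he, inner_blockDiff he, ← Complex.ofReal_sub,
      Complex.norm_real, Real.norm_eq_abs, sq_abs]
    ring
  have hlower := (hframe _ (le_topologicalClosure _ (blockDiff_mem_span_sub_succ e M))).1
  rw [norm_blockDiff_sq he, tsum_congr hcoeff, tsum_mul_left, tsum_blockSign_sub_succ_sq hM0]
    at hlower
  rw [div_lt_iff₀ hA] at hM
  nlinarith

section Indicators

noncomputable def indicatorIco (ε x : ℝ) : Lp ℂ 2 (volume : Measure ℝ) :=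
  indicatorConstLp 2 (measurableSet_Ico (a := x) (b := x + ε)) measure_Ico_lt_top.ne (1 : ℂ)

theorem tauL2_sub (t : ℝ) (f g : Lp ℂ 2 (volume : Measure ℝ)) :
    tauL2 t (f - g) = tauL2 t f - tauL2 t g :=
  map_sub _ f g

theorem tauL2_indicatorIco (t ε x : ℝ) :
    tauL2 t (indicatorIco ε x) = indicatorIco ε (x + t) := by
  simp only [tauL2, indicatorIco, Lp.indicatorConstLp_compMeasurePreserving,
    Set.preimage_sub_const_Ico, add_right_comm x ε t]

theorem inner_indicatorIco (ε x y : ℝ) :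
    ⟪indicatorIco ε x, indicatorIco ε y⟫_ℂ =
      (volume.real (Set.Ico x (x + ε) ∩ Set.Ico y (y + ε)) : ℂ) := by
  simp [indicatorIco, L2.inner_indicatorConstLp_indicatorConstLp]

theorem inner_indicatorIco_self {ε : ℝ} (hε : 0 ≤ ε) (x : ℝ) :
    ⟪indicatorIco ε x, indicatorIco ε x⟫_ℂ = ε := by
  rw [inner_indicatorIco, Set.inter_self, measureReal_def, Real.volume_Ico, add_sub_cancel_left,
    ENNReal.toReal_ofReal hε]

theorem inner_indicatorIco_eq_zero {ε x y : ℝ} (h : ε ≤ |x - y|) :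
    ⟪indicatorIco ε x, indicatorIco ε y⟫_ℂ = 0 := by
  have hdisj : Disjoint (Set.Ico x (x + ε)) (Set.Ico y (y + ε)) := by
    rw [Set.Ico_disjoint_Ico]
    rcases le_abs'.1 h with h | h
    · exact (min_le_left _ _).trans (by linarith [le_max_right x y])
    · exact (min_le_right _ _).trans (by linarith [le_max_left x y])
  simp [inner_indicatorIco, hdisj.inter_eq]

theorem inner_indicatorIco_eq_ite {ι : Type*} [DecidableEq ι] {ε : ℝ} (hε : 0 ≤ ε) {p : ι → ℝ}
    (hp : Pairwise fun i j => ε ≤ |p i - p j|) (i j : ι) :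
    ⟪indicatorIco ε (p i), indicatorIco ε (p j)⟫_ℂ = if i = j then (ε : ℂ) else 0 := by
  split_ifs with hij
  · rw [hij, inner_indicatorIco_self hε]
  · exact inner_indicatorIco_eq_zero (hp hij)

end Indicators

theorem pairwise_le_abs_intCast_mul_sub {δ x : ℝ} (hδ : δ ≤ |x|) :
    Pairwise fun m n : ℤ => δ ≤ |m * x - n * x| := by
  intro m n hmn
  have hone : (1 : ℝ) ≤ |((m - n : ℤ) : ℝ)| := by
    exact_mod_cast Int.one_le_abs (sub_ne_zero.2 hmn)
  rw [← sub_mul, ← Int.cast_sub, abs_mul]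
  nlinarith [abs_nonneg x]

theorem exists_pos_le_abs_sub_intCast_mul {a b : ℝ} (hb : 0 < b)
    (h : ¬ ∃ m : ℤ, a / b = (m : ℝ)) :
    ∃ ε > 0, ε ≤ |b| ∧ ∀ k : ℤ, ε ≤ |a - k * b| := by
  refine ⟨b * |a / b - round (a / b)|,
    mul_pos hb (abs_pos.2 (sub_ne_zero.2 fun hround => h ⟨_, hround⟩)), ?_, fun k => ?_⟩
  · rw [abs_of_pos hb]
    nlinarith [abs_sub_round (a / b)]
  · calc b * |a / b - round (a / b)| ≤ b * |a / b - k| :=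
          mul_le_mul_of_nonneg_left (round_le _ k) hb.le
      _ = |a - k * b| := by
          rw [← abs_of_pos hb, ← abs_mul, abs_of_pos hb, mul_sub, mul_div_cancel₀ _ hb.ne',
            mul_comm]

theorem isFrameSeqWith_translates_indicatorIco_sub {a b ε : ℝ} (hε : 0 < ε) (hεb : ε ≤ |b|)
    (hεa : ∀ k : ℤ, ε ≤ |a - k * b|) :
    IsFrameSeqWith (fun n : ℤ => tauL2 (n * b) (indicatorIco ε 0 - indicatorIco ε a))
      (2 * ε) (2 * ε) := by
  have hsep : Pairwise fun m n : ℤ => ε ≤ |m * b - n * b| :=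
    pairwise_le_abs_intCast_mul_sub hεb
  refine isFrameSeqWith_of_inner_eq_ite (by positivity) fun m n => ?_
  simp only [tauL2_sub, tauL2_indicatorIco, zero_add]
  push_cast
  refine inner_sub_sub_eq_ite (u := fun i : ℤ => indicatorIco ε (i * b))
    (v := fun i : ℤ => indicatorIco ε (a + i * b)) (inner_indicatorIco_eq_ite hε.le hsep)
    (inner_indicatorIco_eq_ite hε.le fun i j hij => ?_)
    (fun i j => inner_indicatorIco_eq_zero ?_) m n
  · simpa only [add_sub_add_left_eq_sub] using hsep hij
  · rw [abs_sub_comm]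
    convert hεa (i - j) using 2
    push_cast
    ring

theorem not_isFrameSeq_translates_indicatorIco_sub {a ε : ℝ} (hε : 0 < ε) (hεa : ε ≤ |a|) :
    ¬ IsFrameSeq fun n : ℤ => tauL2 (n * a) (indicatorIco ε 0 - indicatorIco ε a) := by
  have htranslates : (fun n : ℤ => tauL2 (n * a) (indicatorIco ε 0 - indicatorIco ε a)) =
      fun n : ℤ => indicatorIco ε (n * a) - indicatorIco ε (((n + 1 : ℤ) : ℝ) * a) := by
    ext1 n
    simp only [tauL2_sub, tauL2_indicatorIco, zero_add]
    push_cast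
    ring_nf
  rw [htranslates]
  exact not_isFrameSeq_sub_succ hε
    (inner_indicatorIco_eq_ite hε.le (pairwise_le_abs_intCast_mul_sub hεa))

/-- If `0 < b < a` and `a/b ∉ ℤ`, there is `φ ∈ L²(ℝ)` such that `(τ_{nb}φ)_{n∈ℤ}` is a
frame sequence but `(τ_{na}φ)_{n∈ℤ}` is not. -/
theorem exists_frameSeq_small_step_not_large
    (a b : ℝ) (hb : 0 < b) (hba : b < a) (h : ¬ ∃ m : ℤ, a / b = (m : ℝ)) :
    ∃ φ : Lp ℂ 2 (volume : Measure ℝ),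
      IsFrameSeq (fun n : ℤ => tauL2 ((n : ℤ) * b) φ) ∧
        ¬ IsFrameSeq (fun n : ℤ => tauL2 ((n : ℤ) * a) φ) := by
  obtain ⟨ε, hε, hεb, hε_dist⟩ := exists_pos_le_abs_sub_intCast_mul hb h
  have hεa : ε ≤ |a| := hεb.trans (abs_le_abs_of_nonneg hb.le hba.le)
  exact ⟨indicatorIco ε 0 - indicatorIco ε a,
    ⟨2 * ε, 2 * ε, by positivity, by positivity,
      isFrameSeqWith_translates_indicatorIco_sub hε hεb hε_dist⟩,
    not_isFrameSeq_translates_indicatorIco_sub hε hεa⟩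
end

section
/- For any 0 < b < a, there exists φ ∈ L²(ℝ) such that (τ_{na}φ)_{n∈ℤ} is a frame sequence but (τ_{nb}φ)_{n∈ℤ} is not a frame sequence. -/
open MeasureTheory Complex
open scoped FourierTransform ENNReal InnerProductSpace Real

/-!
Take for `φ` the normalized indicator of `[0, d) ∪ [b, b + d)` with `d = min b (a - b)`. Its
translates by multiples of `a` have disjoint supports, so they are orthonormal, and an orthonormal
family is a Parseval frame for its closed span. Its translates by multiples of `b` overlap only
with their neighbours, in an interval of length `d`, so their Gram matrix is the Toeplitz matrix
with entries `1/2, 1, 1/2`, whose symbol `1 + cos 2πξ` vanishes at `ξ = 1/2`. Concretely, if `t` is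
the tent of height `K` on `[0, 2K]` and `f = ∑ (-1)^k t(k) τ_{kb} φ`, the Gram matrix maps the
coefficients to half the second difference of `t` (with signs), which lives on the three kinks
`0, K, 2K`; hence `‖f‖² = K` while `∑ |⟪f, τ_{mb} φ⟫|² = 3/2`, and no lower frame bound survives
`K → ∞`.
-/

local notation "L²" => Lp ℂ 2 (volume : Measure ℝ)

theorem Orthonormal.tsum_norm_inner_sq_eq_of_mem_closure_span {𝕜 E ι : Type*} [RCLike 𝕜]
    [NormedAddCommGroup E] [InnerProductSpace 𝕜 E] [CompleteSpace E] {e : ι → E}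
    (he : Orthonormal 𝕜 e) {x : E}
    (hx : x ∈ (Submodule.span 𝕜 (Set.range e)).topologicalClosure) :
    ∑' i, ‖⟪x, e i⟫_𝕜‖ ^ 2 = ‖x‖ ^ 2 := by
  set K := (Submodule.span 𝕜 (Set.range e)).topologicalClosure
  have : CompleteSpace K := (Submodule.isClosed_topologicalClosure _).completeSpace_coe
  let e' : ι → K := fun i =>
    ⟨e i, Submodule.le_topologicalClosure _ (Submodule.subset_span ⟨i, rfl⟩)⟩
  have he' : Orthonormal 𝕜 e' := ⟨fun i => he.1 i, fun _ _ hij => he.2 hij⟩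
  have hsp : (Submodule.span 𝕜 (Set.range e'))ᗮ = ⊥ := by
    refine (Submodule.eq_bot_iff _).2 fun y hy => ?_
    have hy' : (y : E) ∈ (Submodule.span 𝕜 (Set.range e))ᗮ := by
      rw [Submodule.mem_orthogonal]
      intro u hu
      refine Submodule.span_induction ?_ ?_ ?_ ?_ hu
      · rintro _ ⟨i, rfl⟩
        exact hy (e' i) (Submodule.subset_span ⟨i, rfl⟩)
      · simp
      · intro u v _ _ hu hv; simp [inner_add_left, hu, hv]
      · intro c u _ hu; simp [inner_smul_left, hu]
    rw [← Submodule.orthogonal_closure] at hy'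
    exact Subtype.ext (inner_self_eq_zero.1 (Submodule.inner_right_of_mem_orthogonal y.2 hy'))
  have hsum :=
    (HilbertBasis.mkOfOrthogonalEqBot he' hsp).hasSum_inner_mul_inner ⟨x, hx⟩ ⟨x, hx⟩
  simp only [HilbertBasis.coe_mkOfOrthogonalEqBot, ← inner_conj_symm (e' _), RCLike.mul_conj,
    inner_self_eq_norm_sq_to_K] at hsum
  exact_mod_cast hsum.tsum_eq

theorem IsFrameSeqWith.of_orthonormal {ι : Type*} {e : ι → L²} (he : Orthonormal ℂ e) :
    IsFrameSeqWith e 1 1 :=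
  fun _ hf => by simp [he.tsum_norm_inner_sq_eq_of_mem_closure_span hf]

noncomputable def tridiagKernel (j : ℤ) : ℝ :=
  if j = 0 then 1 else if j = 1 ∨ j = -1 then 1 / 2 else 0

theorem sum_mul_tridiagKernel {s : Finset ℤ} {c : ℤ → ℝ} (hc : ∀ k ∉ s, c k = 0) (m : ℤ) :
    ∑ k ∈ s, c k * tridiagKernel (m - k) = (c (m - 1) + 2 * c m + c (m + 1)) / 2 := by
  have hnear : ∀ k ∉ ({m - 1, m, m + 1} : Finset ℤ), c k * tridiagKernel (m - k) = 0 := by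
    intro k hk
    simp only [Finset.mem_insert, Finset.mem_singleton] at hk
    rw [tridiagKernel, if_neg (by omega), if_neg (by omega), mul_zero]
  have hfar : ∀ k ∉ s, c k * tridiagKernel (m - k) = 0 := fun k hk => by rw [hc k hk, zero_mul]
  rw [← tsum_eq_sum (L := .unconditional ℤ) hfar, tsum_eq_sum hnear, Finset.sum_insert (by grind),
    Finset.sum_insert (by grind), Finset.sum_singleton]
  simp only [tridiagKernel, sub_sub_cancel, one_ne_zero, ↓reduceIte, Int.reduceNeg, reduceCtorEq,
    or_false, one_div, sub_self, mul_one, sub_add_cancel_left, neg_eq_zero, or_true]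
  ring

theorem inner_sum_smul_of_gram_eq_tridiagKernel {E : Type*} [NormedAddCommGroup E]
    [InnerProductSpace ℂ E] {e : ℤ → E} (he : ∀ n m, ⟪e n, e m⟫_ℂ = tridiagKernel (m - n))
    {s : Finset ℤ} {c : ℤ → ℝ} (hc : ∀ k ∉ s, c k = 0) (m : ℤ) :
    ⟪∑ k ∈ s, (c k : ℂ) • e k, e m⟫_ℂ = ((c (m - 1) + 2 * c m + c (m + 1)) / 2 : ℝ) := by
  simp only [sum_inner, inner_smul_left, he, conj_ofReal, ← ofReal_mul, ← ofReal_sum,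
    sum_mul_tridiagKernel hc]

def tent (K n : ℤ) : ℤ := max 0 (min n (2 * K - n))

theorem tent_eq_zero {K n : ℤ} (h : n ≤ 0 ∨ 2 * K ≤ n) : tent K n = 0 := by
  unfold tent; omega

theorem tent_self {K : ℤ} (hK : 0 ≤ K) : tent K K = K := by
  unfold tent; omega

theorem two_mul_tent_sub_tent_sub_tent {K : ℤ} (hK : 1 ≤ K) (m : ℤ) :
    2 * tent K m - tent K (m - 1) - tent K (m + 1) =
      if m = K then 2 else if m = 0 ∨ m = 2 * K then -1 else 0 := by
  unfold tent; split_ifs <;> omega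

noncomputable def alternatingTent (K n : ℤ) : ℝ := (-1) ^ n * tent K n

noncomputable def tentKink (K m : ℤ) : ℝ :=
  if m = K then 1 else if m = 0 ∨ m = 2 * K then -1 / 2 else 0

theorem alternatingTent_tridiag_eq {K : ℤ} (hK : 1 ≤ K) (m : ℤ) :
    (alternatingTent K (m - 1) + 2 * alternatingTent K m + alternatingTent K (m + 1)) / 2 =
      (-1) ^ m * tentKink K m := by
  have h := congrArg (fun z : ℤ => (z : ℝ)) (two_mul_tent_sub_tent_sub_tent hK m)
  have hne : (-1 : ℝ) ≠ 0 := by norm_num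
  simp only [alternatingTent, zpow_sub_one₀ hne, zpow_add_one₀ hne]
  push_cast at h
  unfold tentKink
  split_ifs at h ⊢ <;> linear_combination (-1 : ℝ) ^ m / 2 * h

theorem tent_mul_tentKink {K : ℤ} (hK : 1 ≤ K) (m : ℤ) :
    (tent K m : ℝ) * tentKink K m = if m = K then (K : ℝ) else 0 := by
  unfold tentKink
  split_ifs with h1 h2
  · rw [h1, tent_self (by omega), mul_one]
  · rw [tent_eq_zero (by omega), Int.cast_zero, zero_mul]
  · rw [mul_zero]

theorem tsum_tentKink_sq {K : ℤ} (hK : 1 ≤ K) : ∑' m, tentKink K m ^ 2 = 3 / 2 := by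
  have hsupp : ∀ m ∉ ({0, K, 2 * K} : Finset ℤ), tentKink K m ^ 2 = 0 := by
    intro m hm
    simp only [Finset.mem_insert, Finset.mem_singleton] at hm
    rw [tentKink, if_neg (by omega), if_neg (by omega)]
    norm_num
  rw [tsum_eq_sum hsupp, Finset.sum_insert (by grind), Finset.sum_insert (by grind),
    Finset.sum_singleton, tentKink, if_neg (by omega), if_pos (Or.inl rfl), tentKink, if_pos rfl,
    tentKink, if_neg (by omega), if_pos (Or.inr rfl)]
  norm_num

theorem IsFrameSeqWith.mul_le_of_gram_eq_tridiagKernel {e : ℤ → L²} {A B : ℝ}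
    (hfr : IsFrameSeqWith e A B) (he : ∀ n m, ⟪e n, e m⟫_ℂ = tridiagKernel (m - n))
    {K : ℤ} (hK : 1 ≤ K) : A * K ≤ 3 / 2 := by
  set s := Finset.Icc 0 (2 * K)
  set f : L² := ∑ k ∈ s, (alternatingTent K k : ℂ) • e k
  have hc : ∀ k ∉ s, alternatingTent K k = 0 := fun k hk => by
    rw [Finset.mem_Icc] at hk
    rw [alternatingTent, tent_eq_zero (by omega), Int.cast_zero, mul_zero]
  have hinner : ∀ m, ⟪f, e m⟫_ℂ = ((-1) ^ m * tentKink K m : ℝ) := fun m => by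
    rw [inner_sum_smul_of_gram_eq_tridiagKernel he hc, alternatingTent_tridiag_eq hK]
  have hcoef : ∑' m, ‖⟪f, e m⟫_ℂ‖ ^ 2 = 3 / 2 := by
    simp only [hinner, norm_real, norm_mul, norm_zpow, norm_neg, norm_one, one_zpow, one_mul,
      Real.norm_eq_abs, sq_abs]
    exact tsum_tentKink_sq hK
  have hnorm : ‖f‖ ^ 2 = K := by
    have hff : ⟪f, f⟫_ℂ = ∑ m ∈ s, ⟪f, (alternatingTent K m : ℂ) • e m⟫_ℂ := inner_sum _ _ _
    have hsign : ∀ m : ℤ, (-1 : ℝ) ^ m * (-1) ^ m = 1 := fun m => by rw [← mul_zpow]; norm_num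
    have hterm : ∀ m, alternatingTent K m * ((-1) ^ m * tentKink K m) =
        if m = K then (K : ℝ) else 0 := fun m => by
      rw [← tent_mul_tentKink hK, alternatingTent, mul_mul_mul_comm, hsign, one_mul]
    simp only [inner_smul_right, hinner, ← ofReal_mul, ← ofReal_sum, hterm,
      Finset.sum_ite_eq', inner_self_eq_norm_sq_to_K] at hff
    rw [if_pos (Finset.mem_Icc.2 (by omega))] at hff
    exact ofReal_injective (by rw [ofReal_pow]; exact hff)
  have hf : f ∈ (Submodule.span ℂ (Set.range e)).topologicalClosure :=
    Submodule.le_topologicalClosure _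
      (Submodule.sum_smul_mem _ _ fun k _ => Submodule.subset_span ⟨k, rfl⟩)
  simpa only [hcoef, hnorm] using (hfr f hf).1

theorem not_isFrameSeq_of_gram_eq_tridiagKernel {e : ℤ → L²}
    (he : ∀ n m, ⟪e n, e m⟫_ℂ = tridiagKernel (m - n)) : ¬ IsFrameSeq e := by
  rintro ⟨A, B, hA, -, hfr⟩
  obtain ⟨K, hK⟩ := exists_nat_gt (3 / (2 * A))
  have hK1 : (1 : ℤ) ≤ K := by
    have : (0 : ℝ) < K := (by positivity : (0 : ℝ) < 3 / (2 * A)).trans hK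
    exact_mod_cast this
  have hbound := hfr.mul_le_of_gram_eq_tridiagKernel he hK1
  rw [div_lt_iff₀ (by positivity)] at hK
  push_cast at hbound
  linarith

theorem tauL2_smul (x : ℝ) (r : ℂ) (φ : L²) : tauL2 x (r • φ) = r • tauL2 x φ :=
  map_smul (Lp.compMeasurePreservingₗ ℂ _ (measurePreserving_sub_right volume x)) r φ

theorem inner_tauL2_indicatorConstLp_one (x y : ℝ) {s : Set ℝ} (hs : MeasurableSet s)
    (hμs : volume s ≠ ∞) :
    ⟪tauL2 x (indicatorConstLp 2 hs hμs (1 : ℂ)), tauL2 y (indicatorConstLp 2 hs hμs 1)⟫_ℂ =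
      volume.real ((fun z => z - x) ⁻¹' s ∩ (fun z => z - y) ⁻¹' s) := by
  rw [tauL2, tauL2, Lp.indicatorConstLp_compMeasurePreserving,
    Lp.indicatorConstLp_compMeasurePreserving]
  exact L2.inner_indicatorConstLp_one_indicatorConstLp_one _ _ _ _

theorem intCast_mul_le_abs_sub {n m k : ℤ} (h : k ≤ |m - n|) {c : ℝ} (hc : 0 ≤ c) :
    (k : ℝ) * c ≤ |m * c - n * c| := by
  rw [← sub_mul, abs_mul, abs_of_nonneg hc]
  exact mul_le_mul_of_nonneg_right (by exact_mod_cast h) hc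

section TwoIntervals
open Set

variable {b d : ℝ}

def twoIntervals (b d x : ℝ) : Set ℝ := Ico x (x + d) ∪ Ico (x + b) (x + b + d)

theorem measurableSet_twoIntervals (b d x : ℝ) : MeasurableSet (twoIntervals b d x) :=
  measurableSet_Ico.union measurableSet_Ico

theorem volume_twoIntervals_ne_top (b d x : ℝ) : volume (twoIntervals b d x) ≠ ∞ :=
  (measure_union_lt_top measure_Ico_lt_top measure_Ico_lt_top).ne

theorem preimage_sub_twoIntervals (b d x : ℝ) :
    (fun z => z - x) ⁻¹' twoIntervals b d 0 = twoIntervals b d x := by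
  simp only [twoIntervals, preimage_union, preimage_sub_const_Ico]
  congr 2 <;> ring

theorem volume_real_twoIntervals (hd : 0 ≤ d) (hdb : d ≤ b) (x : ℝ) :
    volume.real (twoIntervals b d x) = 2 * d := by
  have hdisj : Disjoint (Ico x (x + d)) (Ico (x + b) (x + b + d)) :=
    disjoint_left.2 fun z h h' => by rw [mem_Ico] at h h'; linarith [h.2, h'.1]
  rw [twoIntervals, measureReal_union hdisj measurableSet_Ico measure_Ico_lt_top.ne
    measure_Ico_lt_top.ne, Real.volume_real_Ico_of_le (by linarith),
    Real.volume_real_Ico_of_le (by linarith)]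
  ring

theorem twoIntervals_inter_twoIntervals_add (hdb : d ≤ b) (x : ℝ) :
    twoIntervals b d x ∩ twoIntervals b d (x + b) = Ico (x + b) (x + b + d) := by
  ext z
  simp only [twoIntervals, mem_inter_iff, mem_union, mem_Ico]
  constructor
  · rintro ⟨h | h, h' | h'⟩ <;> constructor <;> linarith [h.1, h.2, h'.1, h'.2]
  · exact fun h => ⟨Or.inr h, Or.inl ⟨h.1, by linarith [h.2]⟩⟩

theorem disjoint_twoIntervals (hdb : d ≤ b) {x y : ℝ} (h : b + d ≤ |y - x|) :
    Disjoint (twoIntervals b d x) (twoIntervals b d y) := by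
  rw [disjoint_left]
  intro z hx hy
  simp only [twoIntervals, mem_union, mem_Ico] at hx hy
  rcases le_abs'.1 h with h | h <;> rcases hx with hx | hx <;> rcases hy with hy | hy <;>
    linarith [hx.1, hx.2, hy.1, hy.2]

noncomputable def twoIntervalsWindow (b d : ℝ) : L² :=
  (((√(2 * d))⁻¹ : ℝ) : ℂ) •
    indicatorConstLp 2 (measurableSet_twoIntervals b d 0) (volume_twoIntervals_ne_top b d 0)
      (1 : ℂ)

theorem inner_tauL2_twoIntervalsWindow (hd : 0 < d) (x y : ℝ) :
    ⟪tauL2 x (twoIntervalsWindow b d), tauL2 y (twoIntervalsWindow b d)⟫_ℂ =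
      (volume.real (twoIntervals b d x ∩ twoIntervals b d y) / (2 * d) : ℝ) := by
  rw [twoIntervalsWindow, tauL2_smul, tauL2_smul, inner_smul_left, inner_smul_right,
    inner_tauL2_indicatorConstLp_one, preimage_sub_twoIntervals, preimage_sub_twoIntervals,
    conj_ofReal, ← ofReal_mul, ← ofReal_mul, ← mul_assoc, ← mul_inv,
    Real.mul_self_sqrt (by positivity), inv_mul_eq_div]

theorem inner_tauL2_twoIntervalsWindow_intCast_mul (hd : 0 < d) (hdb : d ≤ b) (n m : ℤ) :
    ⟪tauL2 (n * b) (twoIntervalsWindow b d), tauL2 (m * b) (twoIntervalsWindow b d)⟫_ℂ =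
      tridiagKernel (m - n) := by
  rw [inner_tauL2_twoIntervalsWindow hd, tridiagKernel]
  congr 1
  obtain rfl | rfl | rfl | hfar : m = n ∨ m = n + 1 ∨ n = m + 1 ∨ 2 ≤ |m - n| := by
    rw [le_abs']; omega
  · rw [inter_self, volume_real_twoIntervals hd.le hdb, sub_self, if_pos rfl,
      div_self (by positivity)]
  · rw [Int.cast_add, Int.cast_one, add_one_mul, twoIntervals_inter_twoIntervals_add hdb,
      Real.volume_real_Ico_of_le (by linarith), add_sub_cancel_left, add_sub_cancel_left,
      if_neg one_ne_zero, if_pos (Or.inl rfl)]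
    field_simp
  · rw [inter_comm, Int.cast_add, Int.cast_one, add_one_mul,
      twoIntervals_inter_twoIntervals_add hdb, Real.volume_real_Ico_of_le (by linarith),
      add_sub_cancel_left, sub_add_cancel_left, if_neg (by norm_num), if_pos (Or.inr rfl)]
    field_simp
  · have hdist : b + d ≤ |m * b - n * b| := by
      have := intCast_mul_le_abs_sub hfar (hd.le.trans hdb)
      push_cast at this
      linarith
    rw [le_abs'] at hfar
    rw [(disjoint_twoIntervals hdb hdist).inter_eq, measureReal_empty, if_neg (by omega),
      if_neg (by omega), zero_div]

theorem orthonormal_tauL2_twoIntervalsWindow {a : ℝ} (hd : 0 < d) (hdb : d ≤ b)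
    (hba : b + d ≤ a) : Orthonormal ℂ (fun n : ℤ => tauL2 (n * a) (twoIntervalsWindow b d)) := by
  rw [orthonormal_iff_ite]
  intro n m
  rw [inner_tauL2_twoIntervalsWindow hd]
  split_ifs with h
  · rw [h, inter_self, volume_real_twoIntervals hd.le hdb, div_self (by positivity), ofReal_one]
  · have hdist : b + d ≤ |m * a - n * a| := by
      have := intCast_mul_le_abs_sub (n := n) (m := m) (k := 1) (by rw [le_abs']; omega)
        (by linarith : (0 : ℝ) ≤ a)
      push_cast at this
      linarith
    rw [(disjoint_twoIntervals hdb hdist).inter_eq, measureReal_empty, zero_div, ofReal_zero]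

end TwoIntervals

/-- For any `0 < b < a` there is `φ ∈ L²(ℝ)` such that `(τ_{na}φ)_{n∈ℤ}` is a frame
sequence but `(τ_{nb}φ)_{n∈ℤ}` is not. -/
theorem exists_frameSeq_large_step_not_small
    (a b : ℝ) (hb : 0 < b) (hba : b < a) :
    ∃ φ : Lp ℂ 2 (volume : Measure ℝ),
      IsFrameSeq (fun n : ℤ => tauL2 ((n : ℤ) * a) φ) ∧
        ¬ IsFrameSeq (fun n : ℤ => tauL2 ((n : ℤ) * b) φ) := by
  set d := min b (a - b)
  have hd : 0 < d := lt_min hb (by linarith)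
  have hdb : d ≤ b := min_le_left _ _
  have hbda : b + d ≤ a := by linarith [min_le_right b (a - b)]
  refine ⟨twoIntervalsWindow b d, ⟨1, 1, one_pos, one_pos, ?_⟩, ?_⟩
  · exact IsFrameSeqWith.of_orthonormal (orthonormal_tauL2_twoIntervalsWindow hd hdb hbda)
  · exact not_isFrameSeq_of_gram_eq_tridiagKernel
      (inner_tauL2_twoIntervalsWindow_intCast_mul hd hdb)
end

section
/- Let F : (0,∞) → (0,∞) be monotone decreasing with F ∈ L², and define G(x) = F(x)∫₀ˣ F(t)dt + ∫ₓ^∞ F(t)²dt. Then for ψ(x) = F(|x|) and any t > 0, (4/3)·G(3t) ≤ ∫_{-∞}^∞ ψ(x+t)ψ(x-t)dx ≤ 4·G(t). -/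
/-!
Since `ψ` is even, the correlation equals `2 (A + B)` with `A = ∫₀ᵗ F(s) F(2t - s) ds` and
`B = ∫₀^∞ F(s) F(s + 2t) ds`. Monotonicity of `F` traps the second factor between `F(3t)`
and `F(t)` for `s < t`, and between `F(s + 2t)` and `F(s)` for `s > t`. For the lower bound
one also needs `∫₀^{3t} F ≤ 3 ∫₀^t F`, which holds because `x ↦ ∫₀ˣ F` is subadditive
when `F` decreases.
-/

open MeasureTheory Complex
open scoped ENNReal Real

/-- `G(x) = F(x)∫₀ˣ F(t)dt + ∫ₓ^∞ F(t)²dt`. -/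
noncomputable def Gfun (F : ℝ → ℝ) (x : ℝ) : ℝ :=
  F x * (∫ t in Set.Ioo (0:ℝ) x, F t) + ∫ t in Set.Ioi x, F t ^ 2

/-- `D_Λ(x) = sup_{t∈ℝ} |Λ ∩ [t, t+x]|` for a sequence `Λ = (λ n)` (extended count). -/
noncomputable def DLam (lam : ℕ → ℝ) (x : ℝ) : ℝ≥0∞ :=
  ⨆ t : ℝ, ((Set.range lam ∩ Set.Icc t (t + x)).encard : ℝ≥0∞)

open Set intervalIntegral

section Translation

variable {E : Type*} [NormedAddCommGroup E]

theorem integrableOn_Ioi_comp_add_right_iff (f : ℝ → E) (a c : ℝ) :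
    IntegrableOn (fun x => f (x + c)) (Ioi a) ↔ IntegrableOn f (Ioi (a + c)) := by
  simpa [preimage_add_const_Ioi, Function.comp_def] using
    (measurePreserving_add_right volume c).integrableOn_comp_preimage
      (Homeomorph.addRight c).measurableEmbedding (f := f) (s := Ioi (a + c))

theorem integral_Ioi_comp_add_right [NormedSpace ℝ E] (f : ℝ → E) (a c : ℝ) :
    ∫ x in Ioi a, f (x + c) = ∫ x in Ioi (a + c), f x := by
  simpa [preimage_add_const_Ioi] using
    (measurePreserving_add_right volume c).setIntegral_preimage_emb
      (Homeomorph.addRight c).measurableEmbedding f (Ioi (a + c))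

end Translation

theorem integral_mul_le_const_mul_integral {f g : ℝ → ℝ} {a b C : ℝ} (hab : a ≤ b)
    (hf : IntervalIntegrable f volume a b)
    (hfg : IntervalIntegrable (fun x => f x * g x) volume a b)
    (hf0 : ∀ x ∈ Ioo a b, 0 ≤ f x) (hg : ∀ x ∈ Ioo a b, g x ≤ C) :
    ∫ x in a..b, f x * g x ≤ C * ∫ x in a..b, f x := by
  rw [← intervalIntegral.integral_const_mul]
  refine integral_mono_on_of_le_Ioo hab hfg (hf.const_mul C) fun x hx => ?_
  rw [mul_comm C]
  exact mul_le_mul_of_nonneg_left (hg x hx) (hf0 x hx)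

theorem const_mul_integral_le_integral_mul {f g : ℝ → ℝ} {a b C : ℝ} (hab : a ≤ b)
    (hf : IntervalIntegrable f volume a b)
    (hfg : IntervalIntegrable (fun x => f x * g x) volume a b)
    (hf0 : ∀ x ∈ Ioo a b, 0 ≤ f x) (hg : ∀ x ∈ Ioo a b, C ≤ g x) :
    C * ∫ x in a..b, f x ≤ ∫ x in a..b, f x * g x := by
  rw [← intervalIntegral.integral_const_mul]
  refine integral_mono_on_of_le_Ioo hab (hf.const_mul C) hfg fun x hx => ?_
  rw [mul_comm C]
  exact mul_le_mul_of_nonneg_left (hg x hx) (hf0 x hx)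

section AntitoneSquareIntegrable

variable {F : ℝ → ℝ}

theorem Gfun_eq_intervalIntegral (x : ℝ) (hx : 0 ≤ x) :
    Gfun F x = F x * (∫ s in 0..x, F s) + ∫ s in Ioi x, F s ^ 2 := by
  rw [Gfun, integral_of_le hx, integral_Ioc_eq_integral_Ioo]

theorem integrableOn_Ioc_zero_of_sq (hF : AntitoneOn F (Ioi 0))
    (hF2 : IntegrableOn (fun x => F x ^ 2) (Ioi 0)) (a : ℝ) : IntegrableOn F (Ioc 0 a) := by
  have hmeas : AEStronglyMeasurable F (volume.restrict (Ioc 0 a)) :=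
    (aemeasurable_restrict_of_antitoneOn measurableSet_Ioc
      (hF.mono Ioc_subset_Ioi_self)).aestronglyMeasurable
  exact ((memLp_two_iff_integrable_sq hmeas).2 (hF2.mono_set Ioc_subset_Ioi_self)).integrable
    one_le_two

theorem integral_zero_add_le_add (hF : AntitoneOn F (Ioi 0))
    (hF2 : IntegrableOn (fun x => F x ^ 2) (Ioi 0)) {a b : ℝ} (ha : 0 ≤ a) (hb : 0 ≤ b) :
    ∫ x in 0..a + b, F x ≤ (∫ x in 0..a, F x) + ∫ x in 0..b, F x := by
  have hint : ∀ c, 0 ≤ c → IntervalIntegrable F volume 0 c := fun c hc =>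
    (intervalIntegrable_iff_integrableOn_Ioc_of_le hc).2 (integrableOn_Ioc_zero_of_sq hF hF2 c)
  have htail : IntervalIntegrable F volume a (a + b) :=
    (hint (a + b) (by linarith)).mono_set
      (uIcc_subset_uIcc (mem_uIcc_of_le ha (by linarith)) right_mem_uIcc)
  have hshift : IntervalIntegrable (fun x => F (x + a)) volume 0 b := by
    simpa using htail.comp_add_right a
  rw [← integral_add_adjacent_intervals (hint a ha) htail, add_le_add_iff_left]
  calc ∫ x in a..a + b, F x = ∫ x in 0..b, F (x + a) := by
        rw [integral_comp_add_right, zero_add, add_comm]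
    _ ≤ ∫ x in 0..b, F x := integral_mono_on_of_le_Ioo hb hshift (hint b hb) fun x hx =>
        hF hx.1 (show 0 < x + a by linarith [hx.1]) (by linarith)

theorem integrableOn_mul_of_nonneg_of_le (hF0 : ∀ x > 0, 0 ≤ F x) (hF : AntitoneOn F (Ioi 0))
    (hF2 : IntegrableOn (fun x => F x ^ 2) (Ioi 0)) {s : Set ℝ} (hs : MeasurableSet s)
    (hs0 : s ⊆ Ioi 0) {g : ℝ → ℝ} (hg : AEMeasurable g (volume.restrict s))
    (hg0 : ∀ x ∈ s, 0 ≤ g x) (hgF : ∀ x ∈ s, g x ≤ F x) :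
    IntegrableOn (fun x => F x * g x) s := by
  refine Integrable.mono' (hF2.mono_set hs0) ?_ ?_
  · exact ((aemeasurable_restrict_of_antitoneOn hs (hF.mono hs0)).mul hg).aestronglyMeasurable
  · filter_upwards [ae_restrict_mem hs] with x hx
    rw [Real.norm_eq_abs, abs_of_nonneg (mul_nonneg (hF0 x (hs0 hx)) (hg0 x hx)), sq]
    exact mul_le_mul_of_nonneg_left (hgF x hx) (hF0 x (hs0 hx))

theorem intervalIntegrable_mul_comp_sub_left (hF0 : ∀ x > 0, 0 ≤ F x)
    (hF : AntitoneOn F (Ioi 0)) (hF2 : IntegrableOn (fun x => F x ^ 2) (Ioi 0)) {t : ℝ}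
    (ht : 0 ≤ t) : IntervalIntegrable (fun s => F s * F (2 * t - s)) volume 0 t := by
  rw [intervalIntegrable_iff_integrableOn_Ioc_of_le ht]
  refine integrableOn_mul_of_nonneg_of_le hF0 hF hF2 measurableSet_Ioc Ioc_subset_Ioi_self ?_
    (fun s hs => hF0 _ (by linarith [hs.2, hs.1])) fun s hs =>
      hF hs.1 (show (0:ℝ) < 2 * t - s by linarith [hs.1, hs.2]) (by linarith [hs.2])
  refine aemeasurable_restrict_of_monotoneOn measurableSet_Ioc fun x hx y hy hxy => ?_
  exact hF (show (0:ℝ) < 2 * t - y by linarith [hy.2, hy.1])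
    (show (0:ℝ) < 2 * t - x by linarith [hx.2, hx.1]) (by linarith)

theorem integrableOn_mul_comp_add_right (hF0 : ∀ x > 0, 0 ≤ F x)
    (hF : AntitoneOn F (Ioi 0)) (hF2 : IntegrableOn (fun x => F x ^ 2) (Ioi 0)) {c : ℝ}
    (hc : 0 ≤ c) : IntegrableOn (fun s => F s * F (s + c)) (Ioi 0) := by
  refine integrableOn_mul_of_nonneg_of_le hF0 hF hF2 measurableSet_Ioi subset_rfl ?_
    (fun s hs => hF0 _ (by linarith [mem_Ioi.1 hs])) fun s hs =>
      hF hs (show (0:ℝ) < s + c by linarith [mem_Ioi.1 hs]) (by linarith)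
  exact aemeasurable_restrict_of_antitoneOn measurableSet_Ioi fun x hx y hy hxy =>
    hF (show (0:ℝ) < x + c by linarith [mem_Ioi.1 hx])
      (show (0:ℝ) < y + c by linarith [mem_Ioi.1 hy]) (by linarith)

theorem integral_Ioi_mul_comp_add_right_le (hF0 : ∀ x > 0, 0 ≤ F x)
    (hF : AntitoneOn F (Ioi 0)) (hF2 : IntegrableOn (fun x => F x ^ 2) (Ioi 0)) {a c : ℝ}
    (ha : 0 ≤ a) (hc : 0 ≤ c) :
    ∫ s in Ioi a, F s * F (s + c) ≤ ∫ s in Ioi a, F s ^ 2 := by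
  refine setIntegral_mono_on
    ((integrableOn_mul_comp_add_right hF0 hF hF2 hc).mono_set (Ioi_subset_Ioi ha))
    (hF2.mono_set (Ioi_subset_Ioi ha)) measurableSet_Ioi fun s hs => ?_
  have hs0 : 0 < s := ha.trans_lt hs
  rw [sq]
  exact mul_le_mul_of_nonneg_left (hF hs0 (show 0 < s + c by linarith) (by linarith)) (hF0 s hs0)

theorem integral_Ioi_sq_le_integral_mul_comp_add_right (hF0 : ∀ x > 0, 0 ≤ F x)
    (hF : AntitoneOn F (Ioi 0)) (hF2 : IntegrableOn (fun x => F x ^ 2) (Ioi 0)) {a c : ℝ}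
    (ha : 0 ≤ a) (hc : 0 ≤ c) :
    ∫ s in Ioi (a + c), F s ^ 2 ≤ ∫ s in Ioi a, F s * F (s + c) := by
  rw [← integral_Ioi_comp_add_right (fun s => F s ^ 2)]
  refine setIntegral_mono_on
    ((integrableOn_Ioi_comp_add_right_iff _ a c).2 (hF2.mono_set (Ioi_subset_Ioi (by linarith))))
    ((integrableOn_mul_comp_add_right hF0 hF hF2 hc).mono_set (Ioi_subset_Ioi ha))
    measurableSet_Ioi fun s hs => ?_
  have hs0 : 0 < s := ha.trans_lt hs
  rw [sq]
  exact mul_le_mul_of_nonneg_right (hF hs0 (show 0 < s + c by linarith) (by linarith))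
    (hF0 _ (by linarith))

theorem integral_comp_abs_add_mul_comp_abs_sub (hF0 : ∀ x > 0, 0 ≤ F x)
    (hF : AntitoneOn F (Ioi 0)) (hF2 : IntegrableOn (fun x => F x ^ 2) (Ioi 0)) {t : ℝ}
    (ht : 0 ≤ t) :
    ∫ x, F |x + t| * F |x - t| =
      2 * ((∫ s in 0..t, F s * F (2 * t - s)) + (∫ s in 0..t, F s * F (s + 2 * t)) +
        ∫ s in Ioi t, F s * F (s + 2 * t)) := by
  set g : ℝ → ℝ := fun x => F (x + t) * F |x - t|
  have hg_abs : ∀ x, F |x + t| * F |x - t| = g |x| := fun x => by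
    rcases le_or_gt 0 x with hx | hx
    · rw [abs_of_nonneg hx, abs_of_nonneg (by linarith : 0 ≤ x + t)]
    · simp only [g]
      rw [abs_of_neg hx, show -x + t = |x - t| by rw [abs_of_neg (by linarith)]; ring,
        show -x - t = -(x + t) by ring, abs_neg, mul_comm]
  have hg_Icc : EqOn g (fun x => F (t - x) * F (2 * t - (t - x))) (uIcc 0 t) := fun x hx => by
    rw [uIcc_of_le ht] at hx
    simp only [g]
    rw [abs_of_nonpos (by linarith [hx.2]), neg_sub, mul_comm]
    ring_nf
  have hg_Ioi : EqOn (fun x => g (x + t)) (fun s => F s * F (s + 2 * t)) (Ioi 0) := fun s hs => by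
    simp only [g]
    rw [add_sub_cancel_right, abs_of_pos hs, mul_comm]
    ring_nf
  have hA := intervalIntegrable_mul_comp_sub_left hF0 hF hF2 ht
  have hB := integrableOn_mul_comp_add_right hF0 hF hF2 (by linarith : 0 ≤ 2 * t)
  have hgB : IntegrableOn g (Ioi t) := by
    simpa using (integrableOn_Ioi_comp_add_right_iff g 0 t).1
      (hB.congr_fun hg_Ioi.symm measurableSet_Ioi)
  have hgA : IntegrableOn g (Ioi 0) := by
    have hreflect := hA.comp_sub_left t
    rw [sub_zero, sub_self] at hreflect
    have hgIoc := (intervalIntegrable_congr (hg_Icc.mono uIoc_subset_uIcc)).2 hreflect.symm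
    simpa [Ioc_union_Ioi_eq_Ioi ht] using hgIoc.1.union hgB
  have hshift := integral_Ioi_comp_add_right g 0 t
  rw [zero_add] at hshift
  rw [funext hg_abs, integral_comp_abs, ← integral_interval_add_Ioi hgA hgB,
    integral_congr hg_Icc,
    integral_comp_sub_left (fun s => F s * F (2 * t - s)), sub_self, sub_zero,
    ← hshift, setIntegral_congr_fun measurableSet_Ioi hg_Ioi,
    ← integral_interval_add_Ioi hB (hB.mono_set (Ioi_subset_Ioi ht)), add_assoc]

theorem integral_comp_abs_add_mul_comp_abs_sub_le (hF0 : ∀ x > 0, 0 ≤ F x)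
    (hF : AntitoneOn F (Ioi 0)) (hF2 : IntegrableOn (fun x => F x ^ 2) (Ioi 0)) {t : ℝ}
    (ht : 0 ≤ t) : ∫ x, F |x + t| * F |x - t| ≤ 4 * Gfun F t := by
  have hB := integrableOn_mul_comp_add_right hF0 hF hF2 (by linarith : 0 ≤ 2 * t)
  have hI := (intervalIntegrable_iff_integrableOn_Ioc_of_le ht).2
    (integrableOn_Ioc_zero_of_sq hF hF2 t)
  have hA_le := integral_mul_le_const_mul_integral ht hI
    (intervalIntegrable_mul_comp_sub_left hF0 hF hF2 ht) (fun s hs => hF0 s hs.1) fun s hs =>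
      hF (hs.1.trans hs.2) (show 0 < 2 * t - s by linarith [hs.2]) (by linarith [hs.2])
  have hB1_le := integral_mul_le_const_mul_integral ht hI
    ((intervalIntegrable_iff_integrableOn_Ioc_of_le ht).2 (hB.mono_set Ioc_subset_Ioi_self))
    (fun s hs => hF0 s hs.1) fun s hs =>
      hF (hs.1.trans hs.2) (show 0 < s + 2 * t by linarith [hs.1]) (by linarith [hs.1])
  have hB2_le := integral_Ioi_mul_comp_add_right_le hF0 hF hF2 ht (by linarith : 0 ≤ 2 * t)
  have hQ : 0 ≤ ∫ s in Ioi t, F s ^ 2 :=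
    setIntegral_nonneg measurableSet_Ioi fun _ _ => sq_nonneg _
  rw [integral_comp_abs_add_mul_comp_abs_sub hF0 hF hF2 ht, Gfun_eq_intervalIntegral t ht]
  linarith

theorem le_integral_comp_abs_add_mul_comp_abs_sub (hF0 : ∀ x > 0, 0 ≤ F x)
    (hF : AntitoneOn F (Ioi 0)) (hF2 : IntegrableOn (fun x => F x ^ 2) (Ioi 0)) {t : ℝ}
    (ht : 0 < t) : 4 / 3 * Gfun F (3 * t) ≤ ∫ x, F |x + t| * F |x - t| := by
  have hB := integrableOn_mul_comp_add_right hF0 hF hF2 (by linarith : 0 ≤ 2 * t)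
  have hI := (intervalIntegrable_iff_integrableOn_Ioc_of_le ht.le).2
    (integrableOn_Ioc_zero_of_sq hF hF2 t)
  have hA_ge := const_mul_integral_le_integral_mul ht.le hI
    (intervalIntegrable_mul_comp_sub_left hF0 hF hF2 ht.le) (fun s hs => hF0 s hs.1) fun s hs =>
      hF (show 0 < 2 * t - s by linarith [hs.2]) (show 0 < 3 * t by linarith) (by linarith [hs.1])
  have hB1_ge := const_mul_integral_le_integral_mul ht.le hI
    ((intervalIntegrable_iff_integrableOn_Ioc_of_le ht.le).2 (hB.mono_set Ioc_subset_Ioi_self))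
    (fun s hs => hF0 s hs.1) fun s hs =>
      hF (show 0 < s + 2 * t by linarith [hs.1]) (show 0 < 3 * t by linarith) (by linarith [hs.2])
  have hB2_ge := integral_Ioi_sq_le_integral_mul_comp_add_right hF0 hF hF2 ht.le
    (by linarith : 0 ≤ 2 * t)
  rw [show t + 2 * t = 3 * t by ring] at hB2_ge
  have hI3 : ∫ s in 0..3 * t, F s ≤ 3 * ∫ s in 0..t, F s := by
    have h2t := integral_zero_add_le_add hF hF2 ht.le ht.le
    have h3t := integral_zero_add_le_add hF hF2 (by linarith : 0 ≤ 2 * t) ht.le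
    rw [← two_mul] at h2t
    rw [show 2 * t + t = 3 * t by ring] at h3t
    linarith
  have hQ : 0 ≤ ∫ s in Ioi (3 * t), F s ^ 2 :=
    setIntegral_nonneg measurableSet_Ioi fun _ _ => sq_nonneg _
  have hFI3 := mul_le_mul_of_nonneg_left hI3 (hF0 (3 * t) (by linarith))
  rw [integral_comp_abs_add_mul_comp_abs_sub hF0 hF hF2 ht.le,
    Gfun_eq_intervalIntegral (3 * t) (by linarith)]
  linarith

end AntitoneSquareIntegrable

/-- For `F` positive decreasing and square-integrable on `(0,∞)`, `ψ(x) = F(|x|)` and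
`t > 0`: `(4/3)G(3t) ≤ ∫ ψ(x+t)ψ(x-t)dx ≤ 4G(t)`. -/
theorem correlation_bounds
    (F : ℝ → ℝ) (hFpos : ∀ x > (0:ℝ), 0 < F x)
    (hFdec : AntitoneOn F (Set.Ioi 0))
    (hFL2 : IntegrableOn (fun t => F t ^ 2) (Set.Ioi 0))
    (t : ℝ) (ht : 0 < t) :
    (4 / 3) * Gfun F (3 * t) ≤ ∫ x : ℝ, F |x + t| * F |x - t| ∧
      ∫ x : ℝ, F |x + t| * F |x - t| ≤ 4 * Gfun F t := by
  have hF0 : ∀ x > (0:ℝ), 0 ≤ F x := fun x hx => (hFpos x hx).le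
  exact ⟨le_integral_comp_abs_add_mul_comp_abs_sub hF0 hFdec hFL2 ht,
    integral_comp_abs_add_mul_comp_abs_sub_le hF0 hFdec hFL2 ht.le⟩
end

section
/- Let F : (0,∞) → (0,∞) be monotone decreasing with F ∈ L², G(x) = F(x)∫₀ˣ F(t)dt + ∫ₓ^∞ F(t)²dt, and let Λ = (λ_n) be a countable subset of ℝ. If φ ∈ L²(ℝ) satisfies |φ(x)| ≤ F(|x|) for |x| ≥ X (some X), and ∫₁^∞ G(x) D_Λ(x) dx/x < ∞, then (τ_{λ_n}φ) has an upper frame bound, i.e., there is B with Σ_n |⟨f, τ_{λ_n}φ⟩|² ≤ B‖f‖² for all f ∈ L²(ℝ). -/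
/-!
Write `g n = τ_{λ n} φ`. By the Schur test, `∑ |⟪g n, f⟫|² ≤ B ‖f‖²` as soon as every row of the
Gram matrix satisfies `∑ₙ |⟪g m, g n⟫| ≤ B`, and `|⟪g m, g n⟫| ≤ C(λ n - λ m)` for the
correlation `C(s) = ∫ |φ x| |φ (x - s)| dx`. For `|s| ≤ r` we have `C(s) ≤ ‖φ‖²`, and at most
`D_Λ(2r)` points of `Λ` are that close to `λ m`. For large `s`, the majorant `F` gives
`C(s) ≲ G(s/2)`: of the two points `|x|` and `|x - s|` one is at least `s/2`. As `G` is
decreasing, `G(d/2) ≲ ∫_{d/4}^{d/2} G(x) dx/x`, and a given `x` lies in at most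
`D_Λ(8x) ≤ 8 D_Λ(x)` of the windows `(d/4, d/2)` with `d = |λ n - λ m|`; hence the far part of
every row is at most a constant times `∫₁^∞ G(x) D_Λ(x) dx/x`.
-/

open MeasureTheory Complex
open scoped ENNReal Real

open Set InnerProductSpace
open scoped Finset ComplexConjugate

section SchurTest

variable {ι 𝕜 E : Type*} [RCLike 𝕜] [NormedAddCommGroup E] [InnerProductSpace 𝕜 E]

theorem sum_sum_mul_mul_le_of_symm {t : Finset ι} (a : ι → ℝ) {K : ι → ι → ℝ}
    (hK : ∀ m n, 0 ≤ K m n) (hsymm : ∀ m n, K m n = K n m) :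
    ∑ m ∈ t, ∑ n ∈ t, a m * a n * K m n ≤ ∑ m ∈ t, a m ^ 2 * ∑ n ∈ t, K m n := by
  have hswap : ∑ m ∈ t, ∑ n ∈ t, a n ^ 2 * K m n = ∑ m ∈ t, ∑ n ∈ t, a m ^ 2 * K m n := by
    rw [Finset.sum_comm]
    exact Finset.sum_congr rfl fun m _ => Finset.sum_congr rfl fun n _ => by rw [hsymm]
  have hamgm : ∀ m n, 2 * (a m * a n * K m n) ≤ a m ^ 2 * K m n + a n ^ 2 * K m n := by
    intro m n
    rw [← add_mul, ← mul_assoc, ← mul_assoc]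
    exact mul_le_mul_of_nonneg_right (two_mul_le_add_sq _ _) (hK m n)
  have h2 : 2 * ∑ m ∈ t, ∑ n ∈ t, a m * a n * K m n ≤
      2 * ∑ m ∈ t, ∑ n ∈ t, a m ^ 2 * K m n :=
    calc 2 * ∑ m ∈ t, ∑ n ∈ t, a m * a n * K m n
        = ∑ m ∈ t, ∑ n ∈ t, 2 * (a m * a n * K m n) := by simp only [Finset.mul_sum]
      _ ≤ ∑ m ∈ t, ∑ n ∈ t, (a m ^ 2 * K m n + a n ^ 2 * K m n) := by
        gcongr with m _ n _; exact hamgm m n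
      _ = 2 * ∑ m ∈ t, ∑ n ∈ t, a m ^ 2 * K m n := by
        rw [Finset.sum_congr rfl fun m _ => Finset.sum_add_distrib, Finset.sum_add_distrib,
          hswap, two_mul]
  simp_rw [Finset.mul_sum]
  linarith

variable {g : ι → E} {t : Finset ι} {B : ℝ}

theorem norm_sum_smul_sq_le_of_sum_norm_inner_le
    (hrow : ∀ m ∈ t, ∑ n ∈ t, ‖⟪g m, g n⟫_𝕜‖ ≤ B) (c : ι → 𝕜) :
    ‖∑ n ∈ t, c n • g n‖ ^ 2 ≤ B * ∑ n ∈ t, ‖c n‖ ^ 2 := by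
  calc ‖∑ n ∈ t, c n • g n‖ ^ 2
      = ‖⟪∑ n ∈ t, c n • g n, ∑ n ∈ t, c n • g n⟫_𝕜‖ := by
        rw [inner_self_eq_norm_sq_to_K, norm_pow, RCLike.norm_ofReal, abs_norm]
    _ = ‖∑ m ∈ t, ∑ n ∈ t, c n * ((starRingEnd 𝕜) (c m) * ⟪g m, g n⟫_𝕜)‖ := by
        rw [sum_inner]
        simp only [inner_sum, inner_smul_left, inner_smul_right]
    _ ≤ ∑ m ∈ t, ∑ n ∈ t, ‖c m‖ * ‖c n‖ * ‖⟪g m, g n⟫_𝕜‖ := by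
        refine (norm_sum_le _ _).trans (Finset.sum_le_sum fun m _ => ?_)
        refine (norm_sum_le _ _).trans (Finset.sum_le_sum fun n _ => ?_)
        rw [norm_mul, norm_mul, RCLike.norm_conj, mul_left_comm, mul_assoc]
    _ ≤ ∑ m ∈ t, ‖c m‖ ^ 2 * ∑ n ∈ t, ‖⟪g m, g n⟫_𝕜‖ :=
        sum_sum_mul_mul_le_of_symm _ (fun _ _ => norm_nonneg _) fun m n => norm_inner_symm _ _
    _ ≤ ∑ m ∈ t, ‖c m‖ ^ 2 * B := by gcongr with m hm; exact hrow m hm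
    _ = B * ∑ n ∈ t, ‖c n‖ ^ 2 := by rw [← Finset.sum_mul, mul_comm]

theorem sum_norm_inner_sq_le_of_sum_norm_inner_le (hB : 0 ≤ B)
    (hrow : ∀ m ∈ t, ∑ n ∈ t, ‖⟪g m, g n⟫_𝕜‖ ≤ B) (f : E) :
    ∑ n ∈ t, ‖⟪g n, f⟫_𝕜‖ ^ 2 ≤ B * ‖f‖ ^ 2 := by
  set S := ∑ n ∈ t, ‖⟪g n, f⟫_𝕜‖ ^ 2
  set u := ∑ n ∈ t, ⟪g n, f⟫_𝕜 • g n
  have hS : S ≤ ‖u‖ * ‖f‖ := by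
    have : ⟪u, f⟫_𝕜 = (S : 𝕜) := by
      simp only [u, S, sum_inner, inner_smul_left, RCLike.conj_mul]
      push_cast; rfl
    calc S = ‖⟪u, f⟫_𝕜‖ := by rw [this, RCLike.norm_ofReal, abs_of_nonneg (by positivity)]
      _ ≤ ‖u‖ * ‖f‖ := norm_inner_le_norm u f
  have hu : ‖u‖ ^ 2 ≤ B * S := norm_sum_smul_sq_le_of_sum_norm_inner_le hrow _
  have hS0 : 0 ≤ S := by positivity
  have hSS : S * S ≤ S * (B * ‖f‖ ^ 2) :=
    calc S * S ≤ (‖u‖ * ‖f‖) * (‖u‖ * ‖f‖) := mul_le_mul hS hS hS0 (by positivity)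
      _ = ‖u‖ ^ 2 * ‖f‖ ^ 2 := by ring
      _ ≤ B * S * ‖f‖ ^ 2 := by gcongr
      _ = S * (B * ‖f‖ ^ 2) := by ring
  rcases hS0.eq_or_lt with h0 | h0
  · rw [← h0]; positivity
  · exact le_of_mul_le_mul_left hSS h0

theorem tsum_norm_inner_sq_le_of_sum_norm_inner_le (hB : 0 ≤ B)
    (hrow : ∀ t : Finset ι, ∀ m ∈ t, ∑ n ∈ t, ‖⟪g m, g n⟫_𝕜‖ ≤ B) (f : E) :
    ∑' n, ‖⟪g n, f⟫_𝕜‖ ^ 2 ≤ B * ‖f‖ ^ 2 :=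
  Real.tsum_le_of_sum_le (fun _ => by positivity) fun t =>
    sum_norm_inner_sq_le_of_sum_norm_inner_le hB (hrow t) f

end SchurTest

section DLam

variable (lam : ℕ → ℝ)

theorem DLam_mono : Monotone (DLam lam) := fun _ _ _ =>
  iSup_mono fun _ => by gcongr

theorem DLam_add_le (x y : ℝ) : DLam lam (x + y) ≤ DLam lam x + DLam lam y := by
  refine iSup_le fun t => ?_
  have hsplit : range lam ∩ Icc t (t + (x + y)) ⊆
      (range lam ∩ Icc t (t + x)) ∪ (range lam ∩ Icc (t + x) (t + x + y)) := by
    rintro a ⟨ha, h1, h2⟩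
    rcases le_total a (t + x) with h | h
    · exact Or.inl ⟨ha, h1, h⟩
    · exact Or.inr ⟨ha, h, by linarith⟩
  calc ((range lam ∩ Icc t (t + (x + y))).encard : ℝ≥0∞)
      ≤ ((range lam ∩ Icc t (t + x)).encard : ℝ≥0∞) +
        ((range lam ∩ Icc (t + x) (t + x + y)).encard : ℝ≥0∞) := by
        exact_mod_cast (Set.encard_le_encard hsplit).trans (Set.encard_union_le _ _)
    _ ≤ DLam lam x + DLam lam y :=
        add_le_add (le_iSup (fun t => ((range lam ∩ Icc t (t + x)).encard : ℝ≥0∞)) t)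
          (le_iSup (fun t => ((range lam ∩ Icc t (t + y)).encard : ℝ≥0∞)) (t + x))

theorem DLam_natCast_mul_le {k : ℕ} (hk : k ≠ 0) (x : ℝ) : DLam lam (k * x) ≤ k * DLam lam x := by
  induction k with
  | zero => exact absurd rfl hk
  | succ k ih =>
    rcases eq_or_ne k 0 with rfl | hk0
    · simp
    calc DLam lam ((k + 1 : ℕ) * x) = DLam lam (k * x + x) := by push_cast; ring_nf
      _ ≤ k * DLam lam x + DLam lam x := (DLam_add_le lam _ _).trans (by gcongr; exact ih hk0)
      _ = (k + 1 : ℕ) * DLam lam x := by push_cast; ring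

variable {lam}

theorem card_le_DLam (hinj : Function.Injective lam) {t : Finset ℕ} {c r : ℝ}
    (ht : ∀ n ∈ t, |lam n - c| ≤ r) : (#t : ℝ≥0∞) ≤ DLam lam (2 * r) := by
  have himage : lam '' t ⊆ range lam ∩ Icc (c - r) (c - r + 2 * r) := by
    rintro _ ⟨n, hn, rfl⟩
    have := abs_le.mp (ht n hn)
    exact ⟨mem_range_self n, by linarith, by linarith⟩
  calc (#t : ℝ≥0∞) = ((lam '' t).encard : ℝ≥0∞) := by
        rw [hinj.injOn.encard_image, Set.encard_coe_eq_coe_finsetCard]; rfl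
    _ ≤ ((range lam ∩ Icc (c - r) (c - r + 2 * r)).encard : ℝ≥0∞) := by
        exact_mod_cast Set.encard_le_encard himage
    _ ≤ DLam lam (2 * r) := le_iSup (fun a => ((range lam ∩ Icc a (a + 2 * r)).encard : ℝ≥0∞)) _

end DLam

theorem Monotone.ne_top_of_setLIntegral_mul_div_lt_top {D w : ℝ → ℝ≥0∞} (hD : Monotone D)
    {a : ℝ} (hw : ∀ x > a, w x ≠ 0)
    (h : ∫⁻ x in Ioi a, w x * D x / ENNReal.ofReal x < ⊤) (y : ℝ) : D y ≠ ⊤ := by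
  intro hy
  have htop : ∀ x ∈ Ioi (max y a), w x * D x / ENNReal.ofReal x = ⊤ := fun x hx => by
    rw [top_le_iff.mp (hy ▸ hD ((le_max_left y a).trans hx.le) : ⊤ ≤ D x),
      ENNReal.mul_top (hw x ((le_max_right y a).trans_lt hx)),
      ENNReal.top_div_of_ne_top ENNReal.ofReal_ne_top]
  refine h.ne (top_le_iff.mp ?_)
  calc (⊤ : ℝ≥0∞) = ∫⁻ _ in Ioi (max y a), ⊤ := by simp
    _ = ∫⁻ x in Ioi (max y a), w x * D x / ENNReal.ofReal x :=
        (setLIntegral_congr_fun measurableSet_Ioi htop).symm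
    _ ≤ ∫⁻ x in Ioi a, w x * D x / ENNReal.ofReal x :=
        lintegral_mono_set (Ioi_subset_Ioi (le_max_right y a))

/-- `Gfun` for an `ℝ≥0∞`-valued majorant, with lower integrals: no integrability is needed. -/
noncomputable def eGfun (f : ℝ → ℝ≥0∞) (x : ℝ) : ℝ≥0∞ :=
  f x * (∫⁻ t in Ioo 0 x, f t) + ∫⁻ t in Ioi x, f t ^ 2

section eGfun

variable {f : ℝ → ℝ≥0∞}

theorem measurable_eGfun (hf : Measurable f) : Measurable (eGfun f) :=
  (hf.mul (Monotone.measurable fun _ _ hab => lintegral_mono_set (Ioo_subset_Ioo_right hab))).add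
    (Antitone.measurable fun _ _ hab => lintegral_mono_set (Ioi_subset_Ioi hab))

theorem eGfun_antitoneOn (hf : AntitoneOn f (Ioi 0)) : AntitoneOn (eGfun f) (Ioi 0) := by
  intro a ha b hb hab
  have hsplit : ∫⁻ t in Ioo 0 b, f t ≤ (∫⁻ t in Ioo 0 a, f t) + ∫⁻ t in Ioc a b, f t := by
    rw [setLIntegral_congr Ioc_ae_eq_Icc]
    refine (lintegral_mono_set fun t ht => ?_).trans (lintegral_union_le _ _ _)
    rcases lt_or_ge t a with h | h
    · exact Or.inl ⟨ht.1, h⟩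
    · exact Or.inr ⟨h, ht.2.le⟩
  have hmid : f b * ∫⁻ t in Ioc a b, f t ≤ ∫⁻ t in Ioc a b, f t ^ 2 := by
    refine (lintegral_const_mul_le _ _).trans (setLIntegral_mono' measurableSet_Ioc fun t ht => ?_)
    rw [sq]
    gcongr
    exact hf (mem_Ioi.mpr (lt_trans ha ht.1)) hb ht.2
  have htail : (∫⁻ t in Ioc a b, f t ^ 2) + ∫⁻ t in Ioi b, f t ^ 2 = ∫⁻ t in Ioi a, f t ^ 2 := by
    rw [← Ioc_union_Ioi_eq_Ioi hab, lintegral_union measurableSet_Ioi Ioc_disjoint_Ioi_same]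
  calc eGfun f b
      ≤ f b * ((∫⁻ t in Ioo 0 a, f t) + ∫⁻ t in Ioc a b, f t) + ∫⁻ t in Ioi b, f t ^ 2 := by
        unfold eGfun; gcongr
    _ ≤ f a * (∫⁻ t in Ioo 0 a, f t) + ((∫⁻ t in Ioc a b, f t ^ 2) + ∫⁻ t in Ioi b, f t ^ 2) := by
        rw [mul_add, add_assoc]
        gcongr
        exact hf ha hb hab
    _ = eGfun f a := by rw [htail, eGfun]

theorem mul_le_eGfun (hf : AntitoneOn f (Ioi 0)) {x : ℝ} (hx : 1 ≤ x) :
    f 1 * f x ≤ eGfun f x :=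
  calc f 1 * f x = f x * ∫⁻ _ in Ioo (0 : ℝ) 1, f 1 := by simp [mul_comm]
    _ ≤ f x * ∫⁻ t in Ioo 0 x, f t := by
        refine mul_le_mul_right ?_ _
        exact (setLIntegral_mono' measurableSet_Ioo fun t ht =>
          hf ht.1 (mem_Ioi.mpr one_pos) ht.2.le).trans
          (lintegral_mono_set (Ioo_subset_Ioo_right hx))
    _ ≤ eGfun f x := le_self_add

end eGfun

/-- Extending by `⊤` on `(-∞, 0]` makes the majorant antitone on all of `ℝ`. -/
noncomputable def ennExtend (F : ℝ → ℝ) (t : ℝ) : ℝ≥0∞ :=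
  if 0 < t then ENNReal.ofReal (F t) else ⊤

section ennExtend

variable {F : ℝ → ℝ}

theorem ennExtend_of_pos {t : ℝ} (ht : 0 < t) : ennExtend F t = ENNReal.ofReal (F t) :=
  if_pos ht

theorem ennExtend_ne_zero (hFpos : ∀ x > 0, 0 < F x) (t : ℝ) : ennExtend F t ≠ 0 := by
  unfold ennExtend
  split_ifs with ht
  · exact (ENNReal.ofReal_pos.mpr (hFpos t ht)).ne'
  · exact ENNReal.top_ne_zero

theorem antitone_ennExtend (hF : AntitoneOn F (Ioi 0)) : Antitone (ennExtend F) := by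
  intro a b hab
  unfold ennExtend
  split_ifs with hb ha ha
  · exact ENNReal.ofReal_le_ofReal (hF ha hb hab)
  · exact le_top
  · exact absurd (ha.trans_le hab) hb
  · exact le_rfl

theorem eGfun_ennExtend (hFpos : ∀ x > 0, 0 < F x) (hFdec : AntitoneOn F (Ioi 0))
    (hFL2 : IntegrableOn (fun t => F t ^ 2) (Ioi 0)) {x : ℝ} (hx : 0 < x) :
    eGfun (ennExtend F) x = ENNReal.ofReal (Gfun F x) := by
  have hF : IntegrableOn F (Ioo 0 x) :=
    ((memLp_two_iff_integrable_sq (aemeasurable_restrict_of_antitoneOn measurableSet_Ioo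
      (hFdec.mono Ioo_subset_Ioi_self)).aestronglyMeasurable).mpr
      (hFL2.mono_set Ioo_subset_Ioi_self)).integrable one_le_two
  have hhead : ∫⁻ t in Ioo 0 x, ennExtend F t = ENNReal.ofReal (∫ t in Ioo 0 x, F t) := by
    rw [setLIntegral_congr_fun measurableSet_Ioo fun t ht => ennExtend_of_pos ht.1,
      ofReal_integral_eq_lintegral_ofReal hF
        ((ae_restrict_iff' measurableSet_Ioo).mpr (ae_of_all _ fun t ht => (hFpos t ht.1).le))]
  have htail : ∫⁻ t in Ioi x, ennExtend F t ^ 2 = ENNReal.ofReal (∫ t in Ioi x, F t ^ 2) := by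
    rw [ofReal_integral_eq_lintegral_ofReal (hFL2.mono_set (Ioi_subset_Ioi hx.le))
      (ae_of_all _ fun t => sq_nonneg _)]
    refine setLIntegral_congr_fun measurableSet_Ioi fun t ht => ?_
    rw [ennExtend_of_pos (hx.trans ht), ENNReal.ofReal_pow (hFpos t (hx.trans ht)).le]
  rw [eGfun, hhead, htail, ennExtend_of_pos hx, Gfun,
    ENNReal.ofReal_add (mul_nonneg (hFpos x hx).le
      (setIntegral_nonneg measurableSet_Ioo fun t ht => (hFpos t ht.1).le))
      (integral_nonneg fun t => sq_nonneg _),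
    ENNReal.ofReal_mul (hFpos x hx).le]

end ennExtend

theorem lintegral_comp_abs_le {u : ℝ → ℝ≥0∞} (hu : Measurable u) :
    ∫⁻ x, u |x| ≤ 2 * ∫⁻ x in Ioi 0, u x := by
  set v := (Ici (0 : ℝ)).indicator u
  have hv : Measurable v := hu.indicator measurableSet_Ici
  have hpt : ∀ x, u |x| ≤ v x + v (-x) := fun x => by
    rcases le_total 0 x with h | h
    · rw [abs_of_nonneg h, show v x = u x from indicator_of_mem (mem_Ici.mpr h) u]
      exact le_self_add
    · rw [abs_of_nonpos h, show v (-x) = u (-x) from indicator_of_mem (mem_Ici.mpr (by linarith)) u]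
      exact le_add_self
  calc ∫⁻ x, u |x| ≤ ∫⁻ x, (v x + v (-x)) := lintegral_mono hpt
    _ = 2 * ∫⁻ x in Ioi 0, u x := by
      rw [lintegral_add_left hv, lintegral_neg_eq_self, ← two_mul,
        lintegral_indicator measurableSet_Ici, setLIntegral_congr Ioi_ae_eq_Ici]

theorem Antitone.mul_le_ite {f : ℝ → ℝ≥0∞} (hf : Antitone f) {a b s : ℝ} (hab : a ≤ b)
    (hs : s ≤ a + b) : f a * f b ≤ if a < s / 2 then f (s / 2) * f a else f a ^ 2 := by
  have hb : f b ≤ f (s / 2) := hf (by linarith)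
  split_ifs with ha
  · rw [mul_comm]
    gcongr
  · rw [sq]
    gcongr
    exact hf hab

theorem setLIntegral_Ioi_ite_le_eGfun {f : ℝ → ℝ≥0∞} (hf : Measurable f) (s : ℝ) :
    ∫⁻ r in Ioi 0, (if r < s / 2 then f (s / 2) * f r else f r ^ 2) ≤ eGfun f (s / 2) := by
  set u : ℝ → ℝ≥0∞ := fun r => if r < s / 2 then f (s / 2) * f r else f r ^ 2
  have hhead : ∫⁻ r in Ioo 0 (s / 2), u r = f (s / 2) * ∫⁻ r in Ioo 0 (s / 2), f r := by
    rw [setLIntegral_congr_fun measurableSet_Ioo fun r hr => if_pos hr.2,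
      lintegral_const_mul _ hf]
  have htail : ∫⁻ r in Ici (s / 2), u r = ∫⁻ r in Ioi (s / 2), f r ^ 2 := by
    rw [setLIntegral_congr_fun measurableSet_Ici fun r hr => if_neg (not_lt.mpr hr),
      setLIntegral_congr Ioi_ae_eq_Ici]
  calc ∫⁻ r in Ioi 0, u r ≤ ∫⁻ r in Ioo 0 (s / 2) ∪ Ici (s / 2), u r :=
        lintegral_mono_set fun r hr => (lt_or_ge r (s / 2)).imp (fun h => ⟨hr, h⟩) id
    _ ≤ eGfun f (s / 2) := by
        rw [eGfun, ← hhead, ← htail]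
        exact lintegral_union_le _ _ _

theorem lintegral_mul_comp_abs_sub_le {f : ℝ → ℝ≥0∞} (hf : Antitone f) (s : ℝ) :
    ∫⁻ x, f |x| * f |x - s| ≤ 4 * eGfun f (s / 2) := by
  set u : ℝ → ℝ≥0∞ := fun r => if r < s / 2 then f (s / 2) * f r else f r ^ 2
  have hu : Measurable u :=
    Measurable.ite measurableSet_Iio (hf.measurable.const_mul _) (hf.measurable.pow_const 2)
  have hpt : ∀ x, f |x| * f |x - s| ≤ u |x| + u |x - s| := by
    intro x
    have hs : s ≤ |x| + |x - s| := by linarith [le_abs_self x, neg_abs_le (x - s)]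
    rcases le_total |x| |x - s| with h | h
    · exact (hf.mul_le_ite h hs).trans le_self_add
    · rw [mul_comm]
      exact (hf.mul_le_ite h (by linarith)).trans le_add_self
  calc ∫⁻ x, f |x| * f |x - s| ≤ ∫⁻ x, (u |x| + u |x - s|) := lintegral_mono hpt
    _ = 2 * ∫⁻ x, u |x| := by
        rw [lintegral_add_left (f := fun x => u |x|) (hu.comp measurable_abs),
          lintegral_sub_right_eq_self (fun x => u |x|), two_mul]
    _ ≤ 2 * (2 * eGfun f (s / 2)) := by
        gcongr
        exact (lintegral_comp_abs_le hu).trans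
          (by gcongr; exact setLIntegral_Ioi_ite_le_eGfun hf.measurable s)
    _ = 4 * eGfun f (s / 2) := by rw [← mul_assoc]; norm_num

section absCorr

variable {E : Type*} [NormedAddCommGroup E]

noncomputable def absCorr (φ : ℝ → E) (s : ℝ) : ℝ≥0∞ :=
  ∫⁻ x, ‖φ x‖ₑ * ‖φ (x - s)‖ₑ

variable {φ : ℝ → E}

theorem absCorr_neg (s : ℝ) : absCorr φ (-s) = absCorr φ s := by
  calc absCorr φ (-s) = ∫⁻ x, (fun y => ‖φ (y - s)‖ₑ * ‖φ y‖ₑ) (x - -s) := by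
        simp only [absCorr, sub_neg_eq_add, add_sub_cancel_right]
    _ = absCorr φ s := by
        rw [lintegral_sub_right_eq_self (fun y => ‖φ (y - s)‖ₑ * ‖φ y‖ₑ), absCorr]
        simp only [mul_comm]

theorem absCorr_abs (s : ℝ) : absCorr φ |s| = absCorr φ s := by
  rcases le_total 0 s with h | h
  · rw [abs_of_nonneg h]
  · rw [abs_of_nonpos h, absCorr_neg]

theorem absCorr_le_lintegral_enorm_sq (hφ : AEMeasurable (fun x => ‖φ x‖ₑ)) (s : ℝ) :
    absCorr φ s ≤ ∫⁻ x, ‖φ x‖ₑ ^ 2 := by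
  have hamgm : ∀ x, 2 * (‖φ x‖ₑ * ‖φ (x - s)‖ₑ) ≤ ‖φ x‖ₑ ^ 2 + ‖φ (x - s)‖ₑ ^ 2 := fun x => by
    simp only [enorm_eq_nnnorm, ← mul_assoc]
    exact_mod_cast two_mul_le_add_sq ‖φ x‖₊ ‖φ (x - s)‖₊
  refine (ENNReal.mul_le_mul_iff_right two_ne_zero ENNReal.ofNat_ne_top).mp ?_
  calc 2 * absCorr φ s = ∫⁻ x, 2 * (‖φ x‖ₑ * ‖φ (x - s)‖ₑ) :=
        (lintegral_const_mul' _ _ ENNReal.ofNat_ne_top).symm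
    _ ≤ ∫⁻ x, (‖φ x‖ₑ ^ 2 + ‖φ (x - s)‖ₑ ^ 2) := lintegral_mono hamgm
    _ = 2 * ∫⁻ x, ‖φ x‖ₑ ^ 2 := by
        rw [lintegral_add_left' (hφ.pow_const 2),
          lintegral_sub_right_eq_self (fun x => ‖φ x‖ₑ ^ 2), two_mul]

theorem absCorr_le_of_dominated (hφ : AEMeasurable (fun x => ‖φ x‖ₑ)) {f : ℝ → ℝ≥0∞}
    (hf : Antitone f) {R s : ℝ} (hdom : ∀ x, R < |x| → ‖φ x‖ₑ ≤ f |x|) (hs : 2 * R < s) :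
    absCorr φ s ≤ (∫⁻ x, f |x| * f |x - s|) + 2 * f (s / 2) * ∫⁻ x in Icc (-R) R, ‖φ x‖ₑ := by
  set ψ := (Icc (-R) R).indicator (fun x => ‖φ x‖ₑ)
  have hψ : AEMeasurable ψ := hφ.indicator measurableSet_Icc
  have hψ_of_le : ∀ x, |x| ≤ R → ψ x = ‖φ x‖ₑ := fun x hx =>
    indicator_of_mem (mem_Icc.mpr (abs_le.mp hx)) _
  have hfar : ∀ y, s - R ≤ |y| → ‖φ y‖ₑ ≤ f (s / 2) := fun y hy =>
    (hdom y (by linarith)).trans (hf (by linarith))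
  have hpt : ∀ x, ‖φ x‖ₑ * ‖φ (x - s)‖ₑ ≤ f |x| * f |x - s| + f (s / 2) * (ψ x + ψ (x - s)) := by
    intro x
    have hsx : s ≤ |x| + |x - s| := by linarith [le_abs_self x, neg_abs_le (x - s)]
    by_cases hx : |x| ≤ R
    · rw [mul_comm, hψ_of_le x hx]
      calc ‖φ (x - s)‖ₑ * ‖φ x‖ₑ ≤ f (s / 2) * ‖φ x‖ₑ := by gcongr; exact hfar _ (by linarith)
        _ ≤ _ := le_add_self.trans (by gcongr; exact le_self_add)
    by_cases hxs : |x - s| ≤ R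
    · rw [hψ_of_le _ hxs]
      calc ‖φ x‖ₑ * ‖φ (x - s)‖ₑ ≤ f (s / 2) * ‖φ (x - s)‖ₑ := by gcongr; exact hfar _ (by linarith)
        _ ≤ _ := le_add_self.trans (by gcongr; exact le_add_self)
    · calc ‖φ x‖ₑ * ‖φ (x - s)‖ₑ ≤ f |x| * f |x - s| := by
            gcongr
            · exact hdom x (not_le.mp hx)
            · exact hdom _ (not_le.mp hxs)
        _ ≤ _ := le_self_add
  have hψs : AEMeasurable fun x => ψ (x - s) :=
    hψ.comp_quasiMeasurePreserving (measurePreserving_sub_right volume s).quasiMeasurePreserving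
  calc absCorr φ s ≤ ∫⁻ x, (f |x| * f |x - s| + f (s / 2) * (ψ x + ψ (x - s))) :=
        lintegral_mono hpt
    _ = (∫⁻ x, f |x| * f |x - s|) + 2 * f (s / 2) * ∫⁻ x in Icc (-R) R, ‖φ x‖ₑ := by
        rw [lintegral_add_left (f := fun x => f |x| * f |x - s|)
            ((hf.measurable.comp measurable_abs).mul
              (hf.measurable.comp (measurable_abs.comp (measurable_sub_const s)))),
          lintegral_const_mul'' (f := fun x => ψ x + ψ (x - s)) _ (hψ.add hψs),
          lintegral_add_left' hψ,
          lintegral_sub_right_eq_self ψ, lintegral_indicator measurableSet_Icc]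
        ring

theorem absCorr_le_mul_eGfun (hφ : AEMeasurable (fun x => ‖φ x‖ₑ)) {f : ℝ → ℝ≥0∞}
    (hf : Antitone f) (hf1 : f 1 ≠ 0) (hf1_top : f 1 ≠ ⊤) {R s : ℝ}
    (hdom : ∀ x, R < |x| → ‖φ x‖ₑ ≤ f |x|) (hs : 2 * R < s) (hs2 : 2 ≤ s) :
    absCorr φ s ≤ (4 + 2 * (∫⁻ x in Icc (-R) R, ‖φ x‖ₑ) / f 1) * eGfun f (s / 2) := by
  have hmid : f (s / 2) ≤ eGfun f (s / 2) / f 1 := by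
    rw [ENNReal.le_div_iff_mul_le (Or.inl hf1) (Or.inl hf1_top), mul_comm]
    exact mul_le_eGfun (hf.antitoneOn _) (by linarith)
  calc absCorr φ s
      ≤ (∫⁻ x, f |x| * f |x - s|) + 2 * f (s / 2) * ∫⁻ x in Icc (-R) R, ‖φ x‖ₑ :=
        absCorr_le_of_dominated hφ hf hdom hs
    _ ≤ 4 * eGfun f (s / 2) + 2 * (eGfun f (s / 2) / f 1) * ∫⁻ x in Icc (-R) R, ‖φ x‖ₑ := by
        gcongr
        exact lintegral_mul_comp_abs_sub_le hf s
    _ = (4 + 2 * (∫⁻ x in Icc (-R) R, ‖φ x‖ₑ) / f 1) * eGfun f (s / 2) := by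
        simp only [div_eq_mul_inv]
        ring

end absCorr

theorem AntitoneOn.le_setLIntegral_Ioo_mul_div {K : ℝ → ℝ≥0∞} (hK : AntitoneOn K (Ioi 0))
    {a : ℝ} (ha : 0 < a) : K (2 * a) ≤ ∫⁻ x in Ioo a (2 * a), 2 * K x / ENNReal.ofReal x := by
  have h2a : ENNReal.ofReal (2 * a) = 2 * ENNReal.ofReal a := by
    rw [ENNReal.ofReal_mul zero_le_two, ENNReal.ofReal_ofNat]
  calc K (2 * a) = ∫⁻ _ in Ioo a (2 * a), 2 * K (2 * a) / ENNReal.ofReal (2 * a) := by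
        rw [setLIntegral_const, Real.volume_Ioo, show 2 * a - a = a by ring, h2a,
          ENNReal.mul_div_mul_left _ _ two_ne_zero ENNReal.ofNat_ne_top,
          ENNReal.div_mul_cancel (ENNReal.ofReal_pos.mpr ha).ne' ENNReal.ofReal_ne_top]
    _ ≤ ∫⁻ x in Ioo a (2 * a), 2 * K x / ENNReal.ofReal x :=
        setLIntegral_mono' measurableSet_Ioo fun x hx => ENNReal.div_le_div
          (by gcongr; exact hK (mem_Ioi.mpr (ha.trans hx.1)) (mem_Ioi.mpr (by linarith)) hx.2.le)
          (ENNReal.ofReal_le_ofReal hx.2.le)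

theorem sum_indicator_Ioo_le_indicator_DLam_mul {lam : ℕ → ℝ} (hinj : Function.Injective lam)
    (m : ℕ) {t : Finset ℕ} (hfar : ∀ n ∈ t, 4 < |lam n - lam m|) (w : ℝ → ℝ≥0∞) (x : ℝ) :
    ∑ n ∈ t, (Ioo (|lam n - lam m| / 4) (|lam n - lam m| / 2)).indicator w x ≤
      (Ioi 1).indicator (fun x => 8 * DLam lam x * w x) x := by
  by_cases hx : 1 < x
  · -- the windows containing `x` belong to points `lam n` within `4 x` of `lam m`
    have hcard : (#{n ∈ t | x ∈ Ioo (|lam n - lam m| / 4) (|lam n - lam m| / 2)} : ℝ≥0∞) ≤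
        8 * DLam lam x :=
      calc _ ≤ DLam lam (2 * (4 * x)) :=
            card_le_DLam hinj fun n hn => by linarith [(Finset.mem_filter.mp hn).2.1]
        _ = DLam lam ((8 : ℕ) * x) := by push_cast; ring_nf
        _ ≤ 8 * DLam lam x := by exact_mod_cast DLam_natCast_mul_le lam (by norm_num) x
    rw [indicator_of_mem (mem_Ioi.mpr hx)]
    simp only [indicator_apply]
    rw [← Finset.sum_filter, Finset.sum_const, nsmul_eq_mul]
    gcongr
  · rw [Finset.sum_eq_zero fun n hn => indicator_of_notMem
      (fun hxI => hx (by have := hfar n hn; linarith [hxI.1])) w]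
    exact bot_le

theorem sum_le_lintegral_mul_DLam {K : ℝ → ℝ≥0∞} (hK : AntitoneOn K (Ioi 0))
    (hKm : Measurable K) {lam : ℕ → ℝ} (hinj : Function.Injective lam) (m : ℕ) {t : Finset ℕ}
    (hfar : ∀ n ∈ t, 4 < |lam n - lam m|) :
    ∑ n ∈ t, K (|lam n - lam m| / 2) ≤
      16 * ∫⁻ x in Ioi 1, K x * DLam lam x / ENNReal.ofReal x := by
  set d := fun n => |lam n - lam m|
  set w := fun x => 2 * K x / ENNReal.ofReal x
  have hw : Measurable w := by fun_prop
  calc ∑ n ∈ t, K (d n / 2) ≤ ∑ n ∈ t, ∫⁻ x in Ioo (d n / 4) (d n / 2), w x := by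
        gcongr with n hn
        have := hK.le_setLIntegral_Ioo_mul_div (a := d n / 4) (by linarith [hfar n hn])
        rwa [show 2 * (d n / 4) = d n / 2 by ring] at this
    _ = ∫⁻ x, ∑ n ∈ t, (Ioo (d n / 4) (d n / 2)).indicator w x := by
        rw [lintegral_finsetSum _ fun n _ => hw.indicator measurableSet_Ioo]
        simp only [lintegral_indicator measurableSet_Ioo]
    _ ≤ ∫⁻ x, (Ioi 1).indicator (fun x => 8 * DLam lam x * w x) x :=
        lintegral_mono (sum_indicator_Ioo_le_indicator_DLam_mul hinj m hfar w)
    _ = 16 * ∫⁻ x in Ioi 1, K x * DLam lam x / ENNReal.ofReal x := by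
        rw [lintegral_indicator measurableSet_Ioi, ← lintegral_const_mul' _ _ (by norm_num)]
        congr 1
        ext x
        simp only [w, div_eq_mul_inv]
        ring

section Rows

variable {E : Type*} [NormedAddCommGroup E] {φ : ℝ → E} {lam : ℕ → ℝ} {t : Finset ℕ} {m : ℕ}

theorem sum_absCorr_le_DLam_mul (hφ : AEMeasurable (fun x => ‖φ x‖ₑ))
    (hinj : Function.Injective lam) {r : ℝ} (hnear : ∀ n ∈ t, |lam n - lam m| ≤ r) :
    ∑ n ∈ t, absCorr φ (lam n - lam m) ≤ DLam lam (2 * r) * ∫⁻ x, ‖φ x‖ₑ ^ 2 :=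
  calc ∑ n ∈ t, absCorr φ (lam n - lam m) ≤ ∑ n ∈ t, ∫⁻ x, ‖φ x‖ₑ ^ 2 :=
        Finset.sum_le_sum fun n _ => absCorr_le_lintegral_enorm_sq hφ _
    _ = #t * ∫⁻ x, ‖φ x‖ₑ ^ 2 := by rw [Finset.sum_const, nsmul_eq_mul]
    _ ≤ DLam lam (2 * r) * ∫⁻ x, ‖φ x‖ₑ ^ 2 := by gcongr; exact card_le_DLam hinj hnear

theorem sum_absCorr_le_mul_lintegral (hφ : AEMeasurable (fun x => ‖φ x‖ₑ)) {f : ℝ → ℝ≥0∞}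
    (hf : Antitone f) (hf1 : f 1 ≠ 0) (hf1_top : f 1 ≠ ⊤) {R : ℝ}
    (hdom : ∀ x, R < |x| → ‖φ x‖ₑ ≤ f |x|) (hinj : Function.Injective lam)
    (hfar : ∀ n ∈ t, 2 * |R| + 4 < |lam n - lam m|) :
    ∑ n ∈ t, absCorr φ (lam n - lam m) ≤ (4 + 2 * (∫⁻ x in Icc (-R) R, ‖φ x‖ₑ) / f 1) *
      (16 * ∫⁻ x in Ioi 1, eGfun f x * DLam lam x / ENNReal.ofReal x) :=
  calc ∑ n ∈ t, absCorr φ (lam n - lam m)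
      ≤ ∑ n ∈ t, (4 + 2 * (∫⁻ x in Icc (-R) R, ‖φ x‖ₑ) / f 1) * eGfun f (|lam n - lam m| / 2) := by
        refine Finset.sum_le_sum fun n hn => ?_
        have := hfar n hn
        rw [← absCorr_abs]
        exact absCorr_le_mul_eGfun hφ hf hf1 hf1_top hdom
          (by linarith [le_abs_self R]) (by linarith [abs_nonneg R])
    _ ≤ _ := by
        rw [← Finset.mul_sum]
        gcongr
        exact sum_le_lintegral_mul_DLam (eGfun_antitoneOn (hf.antitoneOn _))
          (measurable_eGfun hf.measurable) hinj m fun n hn => by linarith [hfar n hn, abs_nonneg R]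

theorem exists_sum_absCorr_le (hφ : MemLp φ 2) {f : ℝ → ℝ≥0∞} (hf : Antitone f)
    (hf0 : ∀ x, f x ≠ 0) (hf1 : f 1 ≠ ⊤) {R : ℝ} (hdom : ∀ x, R < |x| → ‖φ x‖ₑ ≤ f |x|)
    (hinj : Function.Injective lam)
    (hint : ∫⁻ x in Ioi 1, eGfun f x * DLam lam x / ENNReal.ofReal x < ⊤) :
    ∃ B : ℝ≥0∞, B ≠ ⊤ ∧ ∀ (t : Finset ℕ) (m : ℕ), ∑ n ∈ t, absCorr φ (lam n - lam m) ≤ B := by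
  have hφm : AEMeasurable fun x => ‖φ x‖ₑ := hφ.1.enorm
  set r := 2 * |R| + 4
  have hc : ∫⁻ x in Icc (-R) R, ‖φ x‖ₑ ≠ ⊤ :=
    ((hφ.restrict (Icc (-R) R)).integrable one_le_two).2.ne
  have hM : ∫⁻ x, ‖φ x‖ₑ ^ 2 ≠ ⊤ := by
    simpa [HasFiniteIntegral, enorm_pow] using
      (((memLp_two_iff_integrable_sq_norm hφ.1).mp hφ).2).ne
  have hD : DLam lam (2 * r) ≠ ⊤ :=
    (DLam_mono lam).ne_top_of_setLIntegral_mul_div_lt_top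
      (fun x hx => ne_bot_of_le_ne_bot (mul_ne_zero (hf0 1) (hf0 x))
        (mul_le_eGfun (hf.antitoneOn _) hx.le)) hint _
  set c := ∫⁻ x in Icc (-R) R, ‖φ x‖ₑ
  set I := ∫⁻ x in Ioi 1, eGfun f x * DLam lam x / ENNReal.ofReal x
  have hcf : c / f 1 ≠ ⊤ := ENNReal.div_ne_top hc (hf0 1)
  refine ⟨DLam lam (2 * r) * (∫⁻ x, ‖φ x‖ₑ ^ 2) + (4 + 2 * c / f 1) * (16 * I), ?_, fun t m => ?_⟩
  · rw [mul_div_assoc]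
    exact ENNReal.add_ne_top.mpr ⟨ENNReal.mul_ne_top hD hM, ENNReal.mul_ne_top
      (ENNReal.add_ne_top.mpr ⟨ENNReal.ofNat_ne_top, ENNReal.mul_ne_top ENNReal.ofNat_ne_top hcf⟩)
      (ENNReal.mul_ne_top ENNReal.ofNat_ne_top hint.ne)⟩
  rw [← Finset.sum_filter_add_sum_filter_not t (fun n => |lam n - lam m| ≤ r)]
  refine add_le_add ?_ ?_
  · exact sum_absCorr_le_DLam_mul hφm hinj fun n hn => (Finset.mem_filter.mp hn).2
  · exact sum_absCorr_le_mul_lintegral hφm hf (hf0 1) hf1 hdom hinj fun n hn =>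
      not_le.mp (Finset.mem_filter.mp hn).2

end Rows

theorem enorm_integral_conj_mul_le_absCorr (φ : ℝ → ℂ) (a b : ℝ) :
    ‖∫ x, φ (x - b) * conj (φ (x - a))‖ₑ ≤ absCorr φ (b - a) :=
  calc ‖∫ x, φ (x - b) * conj (φ (x - a))‖ₑ ≤ ∫⁻ x, ‖φ (x - b) * conj (φ (x - a))‖ₑ :=
        enorm_integral_le_lintegral_enorm _
    _ = ∫⁻ x, (fun y => ‖φ y‖ₑ * ‖φ (y - (b - a))‖ₑ) (x - a) := by
        congr 1
        ext x
        rw [enorm_mul, RCLike.enorm_conj, mul_comm]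
        simp only [sub_sub_sub_cancel_right]
    _ = absCorr φ (b - a) :=
        lintegral_sub_right_eq_self (fun y => ‖φ y‖ₑ * ‖φ (y - (b - a))‖ₑ) a

theorem MemLp.inner_toLp_toLp {α 𝕜 : Type*} [MeasurableSpace α] {μ : Measure α} [RCLike 𝕜]
    {a b : α → 𝕜} (ha : MemLp a 2 μ) (hb : MemLp b 2 μ) :
    ⟪ha.toLp a, hb.toLp b⟫_𝕜 = ∫ x, b x * conj (a x) ∂μ := by
  rw [L2.inner_def]
  refine integral_congr_ae ?_
  filter_upwards [ha.coeFn_toLp, hb.coeFn_toLp] with x hax hbx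
  rw [hax, hbx, RCLike.inner_apply]

theorem tsum_norm_integral_mul_conj_le {φ : ℝ → ℂ} (hφ : MemLp φ 2) {lam : ℕ → ℝ} {B : ℝ≥0∞}
    (hB : B ≠ ⊤) (hrow : ∀ (t : Finset ℕ) (m : ℕ), ∑ n ∈ t, absCorr φ (lam n - lam m) ≤ B)
    {f : ℝ → ℂ} (hf : MemLp f 2) :
    ∑' n, ‖∫ x, f x * conj (φ (x - lam n))‖ ^ 2 ≤ B.toReal * ∫ x, ‖f x‖ ^ 2 := by
  have htrans : ∀ c, MemLp (fun x => φ (x - c)) 2 := fun c =>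
    hφ.comp_measurePreserving (measurePreserving_sub_right volume c)
  set g : ℕ → Lp ℂ 2 (volume : Measure ℝ) := fun n => (htrans (lam n)).toLp
  have hgram : ∀ (t : Finset ℕ), ∀ m ∈ t, ∑ n ∈ t, ‖⟪g m, g n⟫_ℂ‖ ≤ B.toReal := by
    intro t m _
    rw [← ENNReal.ofReal_le_iff_le_toReal hB, ENNReal.ofReal_sum_of_nonneg fun _ _ => norm_nonneg _]
    refine le_trans (Finset.sum_le_sum fun n _ => ?_) (hrow t m)
    rw [ofReal_norm, MemLp.inner_toLp_toLp]
    exact enorm_integral_conj_mul_le_absCorr φ _ _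
  have hnorm : ‖hf.toLp f‖ ^ 2 = ∫ x, ‖f x‖ ^ 2 := by
    rw [← inner_self_eq_norm_sq (𝕜 := ℂ), MemLp.inner_toLp_toLp]
    simp_rw [RCLike.mul_conj, ← RCLike.ofReal_pow, integral_ofReal, RCLike.ofReal_re]
  have := tsum_norm_inner_sq_le_of_sum_norm_inner_le ENNReal.toReal_nonneg hgram (hf.toLp f)
  simpa only [g, MemLp.inner_toLp_toLp, hnorm] using this

/-- Theorem 3.1(1): if `|φ(x)| ≤ F(|x|)` for `|x| ≥ X` and
`∫₁^∞ G(x) D_Λ(x) dx/x < ∞`, then `(τ_{λₙ}φ)` has an upper frame bound. -/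
theorem upper_frame_bound_of_density
    (F : ℝ → ℝ) (hFpos : ∀ x > (0:ℝ), 0 < F x)
    (hFdec : AntitoneOn F (Set.Ioi 0))
    (hFL2 : IntegrableOn (fun t => F t ^ 2) (Set.Ioi 0))
    (lam : ℕ → ℝ) (hinj : Function.Injective lam)
    (φ : ℝ → ℂ) (hφ : MeasureTheory.MemLp φ 2 (volume : Measure ℝ))
    (X : ℝ) (hdom : ∀ x : ℝ, X ≤ |x| → ‖φ x‖ ≤ F |x|)
    (hint : ∫⁻ x in Set.Ioi (1:ℝ),
        ENNReal.ofReal (Gfun F x) * DLam lam x / ENNReal.ofReal x < ⊤) :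
    ∃ B : ℝ, ∀ f : ℝ → ℂ, MeasureTheory.MemLp f 2 (volume : Measure ℝ) →
      ∑' n : ℕ, ‖∫ x : ℝ, f x * (starRingEnd ℂ) (φ (x - lam n))‖ ^ 2 ≤
        B * ∫ x : ℝ, ‖f x‖ ^ 2 := by
  have hdom' : ∀ x, |X| < |x| → ‖φ x‖ₑ ≤ ennExtend F |x| := fun x hx => by
    rw [ennExtend_of_pos ((abs_nonneg X).trans_lt hx), ← ofReal_norm]
    exact ENNReal.ofReal_le_ofReal (hdom x ((le_abs_self X).trans hx.le))
  have hint' : ∫⁻ x in Ioi 1, eGfun (ennExtend F) x * DLam lam x / ENNReal.ofReal x < ⊤ := by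
    rwa [setLIntegral_congr_fun measurableSet_Ioi fun x hx => by
      rw [eGfun_ennExtend hFpos hFdec hFL2 (zero_lt_one.trans hx)]]
  obtain ⟨B, hB, hrow⟩ := exists_sum_absCorr_le hφ (antitone_ennExtend hFdec)
    (ennExtend_ne_zero hFpos) (by rw [ennExtend_of_pos one_pos]; exact ENNReal.ofReal_ne_top)
    hdom' hinj hint'
  exact ⟨B.toReal, fun f hf => tsum_norm_integral_mul_conj_le hφ hB hrow hf⟩
end

section
/- Suppose F : (0,∞)→(0,∞) is monotone decreasing, ε > 0, x^{1-ε}F(x) is increasing for x ≥ 1, and x^{1+ε}F(x)² is decreasing for x ≥ 1. Then with G(x) = F(x)∫₀ˣF(t)dt + ∫ₓ^∞F(t)²dt, there is a constant C with C^{-1} x F(x)² ≤ G(x) ≤ C x F(x)² for all x ≥ 1. -/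
/-!
The lower bound only uses that `F` decreases: `∫₀ˣ F ≥ x F(x)`. For the upper bound split `∫₀ˣ F`
at `1`. The two growth conditions compare `F` with powers of `t` on either side of `x`:
`F(t) ≤ (x/t)^(1-ε) F(x)` for `1 ≤ t ≤ x` and `F(t)² ≤ (x/t)^(1+ε) F(x)²` for `t ≥ x`, and
integrating these powers gives `∫₁ˣ F ≤ x F(x)/ε` and `∫ₓ^∞ F² ≤ x F(x)²/ε`. The remaining term
`F(x) ∫₀¹ F` is absorbed since `x F(x) ≥ F(1)`; here `∫₀¹ F` is finite because `F ∈ L²(0,1)`.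
-/

open MeasureTheory Complex
open scoped ENNReal Real

open Set Real

theorem integrableOn_of_integrableOn_sq {α : Type*} [MeasurableSpace α] {μ : Measure α}
    {f : α → ℝ} {s : Set α} (hs : μ s ≠ ∞) (hf : AEStronglyMeasurable f (μ.restrict s))
    (hf2 : IntegrableOn (fun t => f t ^ 2) s μ) : IntegrableOn f s μ :=
  haveI : IsFiniteMeasure (μ.restrict s) := isFiniteMeasure_restrict.2 hs
  ((memLp_two_iff_integrable_sq hf).2 hf2).integrable one_le_two

theorem AntitoneOn.integrableOn_of_integrableOn_sq {f : ℝ → ℝ} {s : Set ℝ} (hf : AntitoneOn f s)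
    (hs : MeasurableSet s) (hμ : volume s ≠ ∞) (hf2 : IntegrableOn (fun t => f t ^ 2) s) :
    IntegrableOn f s :=
  _root_.integrableOn_of_integrableOn_sq hμ
    (aemeasurable_restrict_of_antitoneOn hs hf).aestronglyMeasurable hf2

theorem AntitoneOn.mul_le_setIntegral_Ioo {f : ℝ → ℝ} {a b : ℝ} (hab : a ≤ b)
    (hf : AntitoneOn f (Ioc a b)) (hint : IntegrableOn f (Ioo a b)) :
    (b - a) * f b ≤ ∫ t in Ioo a b, f t := by
  calc (b - a) * f b = ∫ _ in Ioo a b, f b := by simp [hab]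
    _ ≤ ∫ t in Ioo a b, f t :=
      setIntegral_mono_on (integrableOn_const measure_Ioo_lt_top.ne) hint measurableSet_Ioo
        fun t ht => hf (Ioo_subset_Ioc_self ht) (right_mem_Ioc.2 (ht.1.trans ht.2)) ht.2.le

section PowerWeighted

variable {g : ℝ → ℝ} {a x r : ℝ}

theorem le_mul_of_monotoneOn_rpow_mul (hr : r ≤ 1) (hg : MonotoneOn (fun t => t ^ r * g t) (Ici 1))
    (hx : 1 ≤ x) (hgx : 0 ≤ g x) : g 1 ≤ x * g x :=
  calc g 1 = 1 ^ r * g 1 := by rw [one_rpow, one_mul]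
    _ ≤ x ^ r * g x := hg (mem_Ici.2 le_rfl) hx hx
    _ ≤ x * g x := by
        gcongr
        simpa using rpow_le_rpow_of_exponent_le hx hr

theorem intervalIntegral_le_of_monotoneOn_rpow_mul (hr : r < 1) (ha : 0 < a) (hax : a ≤ x)
    (hg : MonotoneOn (fun t => t ^ r * g t) (Ici a)) (hgx : 0 ≤ g x)
    (hint : IntervalIntegrable g volume a x) :
    ∫ t in a..x, g t ≤ x * g x / (1 - r) := by
  have hx : 0 < x := ha.trans_le hax
  have hpoint : ∀ t ∈ Icc a x, g t ≤ x ^ r * g x * t ^ (-r) := by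
    intro t ht
    have ht0 : 0 < t := ha.trans_le ht.1
    calc g t = t ^ r * g t * t ^ (-r) := by
          rw [mul_right_comm, ← rpow_add ht0, add_neg_cancel, rpow_zero, one_mul]
      _ ≤ x ^ r * g x * t ^ (-r) :=
          mul_le_mul_of_nonneg_right (hg ht.1 (ht.1.trans ht.2) ht.2) (rpow_nonneg ht0.le _)
  calc ∫ t in a..x, g t ≤ ∫ t in a..x, x ^ r * g x * t ^ (-r) :=
        intervalIntegral.integral_mono_on hax hint
          ((intervalIntegral.intervalIntegrable_rpow' (by linarith)).const_mul _) hpoint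
    _ = x ^ r * g x * ((x ^ (1 - r) - a ^ (1 - r)) / (1 - r)) := by
        rw [intervalIntegral.integral_const_mul, integral_rpow (Or.inl (by linarith)),
          neg_add_eq_sub]
    _ ≤ x ^ r * g x * (x ^ (1 - r) / (1 - r)) := by
        have : 0 ≤ a ^ (1 - r) := rpow_nonneg ha.le _
        have : 0 < 1 - r := by linarith
        gcongr
        linarith
    _ = x * g x / (1 - r) := by
        rw [mul_div_assoc', mul_right_comm, ← rpow_add hx, add_sub_cancel, rpow_one]

theorem setIntegral_Ioi_le_of_antitoneOn_rpow_mul (hr : 1 < r) (ha : 0 < a) (hax : a ≤ x)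
    (hg : AntitoneOn (fun t => t ^ r * g t) (Ici a)) (hint : IntegrableOn g (Ioi x)) :
    ∫ t in Ioi x, g t ≤ x * g x / (r - 1) := by
  have hx : 0 < x := ha.trans_le hax
  have hpoint : ∀ t ∈ Ioi x, g t ≤ x ^ r * g x * t ^ (-r) := by
    intro t ht
    have ht0 : 0 < t := hx.trans ht
    calc g t = t ^ r * g t * t ^ (-r) := by
          rw [mul_right_comm, ← rpow_add ht0, add_neg_cancel, rpow_zero, one_mul]
      _ ≤ x ^ r * g x * t ^ (-r) :=
          mul_le_mul_of_nonneg_right (hg hax (hax.trans ht.le) ht.le) (rpow_nonneg ht0.le _)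
  calc ∫ t in Ioi x, g t ≤ ∫ t in Ioi x, x ^ r * g x * t ^ (-r) :=
        setIntegral_mono_on hint ((integrableOn_Ioi_rpow_of_lt (by linarith) hx).const_mul _)
          measurableSet_Ioi hpoint
    _ = x ^ r * g x * (x ^ (1 - r) / (r - 1)) := by
        rw [integral_const_mul, integral_Ioi_rpow_of_lt (by linarith) hx, neg_add_eq_sub,
          neg_div, ← div_neg, neg_sub]
    _ = x * g x / (r - 1) := by
        rw [mul_div_assoc', mul_right_comm, ← rpow_add hx, add_sub_cancel, rpow_one]

end PowerWeighted

theorem setIntegral_Ioo_eq_add_intervalIntegral {f : ℝ → ℝ} {a b c : ℝ} (hab : a ≤ b) (hbc : b ≤ c)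
    (hf : IntegrableOn f (Ioo a c)) :
    ∫ t in Ioo a c, f t = (∫ t in Ioo a b, f t) + ∫ t in b..c, f t := by
  have hint : ∀ {u v}, a ≤ u → u ≤ v → v ≤ c → IntervalIntegrable f volume u v :=
    fun hu huv hv => (intervalIntegrable_iff_integrableOn_Ioo_of_le huv).2
      (hf.mono_set (Ioo_subset_Ioo hu hv))
  rw [← integral_Ioc_eq_integral_Ioo, ← integral_Ioc_eq_integral_Ioo,
    ← intervalIntegral.integral_of_le (hab.trans hbc), ← intervalIntegral.integral_of_le hab,
    intervalIntegral.integral_add_adjacent_intervals (hint le_rfl hab hbc) (hint hab hbc le_rfl)]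

section Gfun

variable {F : ℝ → ℝ} {ε x : ℝ}

theorem integrableOn_Ioo_zero_of_antitoneOn (hFdec : AntitoneOn F (Ioi 0))
    (hFL2 : IntegrableOn (fun t => F t ^ 2) (Ioi 0)) (x : ℝ) : IntegrableOn F (Ioo 0 x) :=
  (hFdec.mono Ioo_subset_Ioi_self).integrableOn_of_integrableOn_sq measurableSet_Ioo
    measure_Ioo_lt_top.ne (hFL2.mono_set Ioo_subset_Ioi_self)

theorem mul_sq_le_Gfun (hFdec : AntitoneOn F (Ioi 0))
    (hFL2 : IntegrableOn (fun t => F t ^ 2) (Ioi 0)) (hx : 0 ≤ x) (hFx : 0 ≤ F x) :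
    x * F x ^ 2 ≤ Gfun F x := by
  have hmain : x * F x ≤ ∫ t in Ioo 0 x, F t := by
    simpa using (hFdec.mono Ioc_subset_Ioi_self).mul_le_setIntegral_Ioo hx
      (integrableOn_Ioo_zero_of_antitoneOn hFdec hFL2 x)
  have htail : 0 ≤ ∫ t in Ioi x, F t ^ 2 :=
    setIntegral_nonneg measurableSet_Ioi fun t _ => sq_nonneg (F t)
  calc x * F x ^ 2 = F x * (x * F x) := by ring
    _ ≤ F x * ∫ t in Ioo 0 x, F t := mul_le_mul_of_nonneg_left hmain hFx
    _ ≤ Gfun F x := le_add_of_nonneg_right htail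

theorem Gfun_le (hFpos : ∀ x > (0:ℝ), 0 < F x) (hFdec : AntitoneOn F (Ioi 0))
    (hFL2 : IntegrableOn (fun t => F t ^ 2) (Ioi 0)) (hε : 0 < ε)
    (hinc : MonotoneOn (fun x : ℝ => x ^ (1 - ε) * F x) (Ici 1))
    (hdec : AntitoneOn (fun x : ℝ => x ^ (1 + ε) * F x ^ 2) (Ici 1)) (hx : 1 ≤ x) :
    Gfun F x ≤ (2 / ε + (∫ t in Ioo 0 1, F t) / F 1) * (x * F x ^ 2) := by
  set K := ∫ t in Ioo 0 1, F t
  have hx0 : 0 < x := one_pos.trans_le hx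
  have hFx : 0 < F x := hFpos x hx0
  have hFint : IntegrableOn F (Ioo 0 x) := integrableOn_Ioo_zero_of_antitoneOn hFdec hFL2 x
  have hK : K ≤ K / F 1 * (x * F x) := by
    rw [div_mul_eq_mul_div, le_div_iff₀ (hFpos 1 one_pos)]
    exact mul_le_mul_of_nonneg_left (le_mul_of_monotoneOn_rpow_mul (by linarith) hinc hx hFx.le)
      (setIntegral_nonneg measurableSet_Ioo fun t ht => (hFpos t ht.1).le)
  have hmid : ∫ t in 1..x, F t ≤ x * F x / ε := by
    simpa using intervalIntegral_le_of_monotoneOn_rpow_mul (by linarith) one_pos hx hinc hFx.le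
      ((intervalIntegrable_iff_integrableOn_Ioo_of_le hx).2
        (hFint.mono_set (Ioo_subset_Ioo_left zero_le_one)))
  have htail : ∫ t in Ioi x, F t ^ 2 ≤ x * F x ^ 2 / ε := by
    simpa using setIntegral_Ioi_le_of_antitoneOn_rpow_mul (g := fun t => F t ^ 2) (by linarith)
      one_pos hx hdec (hFL2.mono_set (Ioi_subset_Ioi hx0.le))
  calc Gfun F x = F x * (K + ∫ t in 1..x, F t) + ∫ t in Ioi x, F t ^ 2 := by
        rw [Gfun, setIntegral_Ioo_eq_add_intervalIntegral zero_le_one hx hFint]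
    _ ≤ F x * (K / F 1 * (x * F x) + x * F x / ε) + x * F x ^ 2 / ε := by gcongr
    _ = (2 / ε + K / F 1) * (x * F x ^ 2) := by ring

end Gfun

/-- Lemma 3.3: under the regularity conditions on `F`, `G(x) ≍ x F(x)²` for `x ≥ 1`. -/
theorem Gfun_comparable
    (F : ℝ → ℝ) (hFpos : ∀ x > (0:ℝ), 0 < F x)
    (hFdec : AntitoneOn F (Set.Ioi 0))
    (hFL2 : IntegrableOn (fun t => F t ^ 2) (Set.Ioi 0))
    (ε : ℝ) (hε : 0 < ε)
    (hinc : MonotoneOn (fun x : ℝ => x ^ (1 - ε) * F x) (Set.Ici 1))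
    (hdec : AntitoneOn (fun x : ℝ => x ^ (1 + ε) * F x ^ 2) (Set.Ici 1)) :
    ∃ C : ℝ, 0 < C ∧ ∀ x ≥ (1:ℝ),
      C⁻¹ * (x * F x ^ 2) ≤ Gfun F x ∧ Gfun F x ≤ C * (x * F x ^ 2) := by
  set C := max 1 (2 / ε + (∫ t in Ioo 0 1, F t) / F 1)
  have hC : 1 ≤ C := le_max_left _ _
  refine ⟨C, one_pos.trans_le hC, fun x hx => ⟨?_, ?_⟩⟩
  · have hx0 : 0 < x := one_pos.trans_le hx
    calc C⁻¹ * (x * F x ^ 2) ≤ x * F x ^ 2 :=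
          mul_le_of_le_one_left (by positivity) (inv_le_one_of_one_le₀ hC)
      _ ≤ Gfun F x := mul_sq_le_Gfun hFdec hFL2 hx0.le (hFpos x hx0).le
  · calc Gfun F x ≤ (2 / ε + (∫ t in Ioo 0 1, F t) / F 1) * (x * F x ^ 2) :=
          Gfun_le hFpos hFdec hFL2 hε hinc hdec hx
      _ ≤ C * (x * F x ^ 2) := by gcongr; exact le_max_right _ _
end
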